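/- arXiv:2507.19400 — 8 statements merged into one kernel-verified Lean document; each statement's English description precedes it below -/
import Mathlib

section
/- The two maps S = \sum_{\ell=0}^d F_\ell E^*_\ell and T = \sum_{\ell=0}^d E^*_\ell F_\ell in End(V) are mutually inverse bijections; moreover S sends E^*_i V onto F_i V and T sends F_i V onto E^*_i V for 0 \le i \le d. -/
/-!
Expanding `1 = ∑ₘ E*ₘ` between two copies of `Fₗ`, triangularity kills every term except
`m = l`, so `Fₗ E*ₗ Fₗ = Fₗ`, and symmetrically `E*ₗ Fₗ E*ₗ = E*ₗ`. Orthogonality of the `E*ₗ`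
collapses `S T` to `∑ₗ Fₗ E*ₗ Fₗ = ∑ₗ Fₗ = 1`, and `S E*ᵢ = Fᵢ E*ᵢ`, whose range is that of
`Fᵢ` because `Fᵢ E*ᵢ Fᵢ = Fᵢ`.
-/

open Finset

section Semiring

variable {R : Type*} [Semiring R]

theorem mul_mul_eq_mul_of_sum_eq_one {ι : Type*} {s : Finset ι} {e : ι → R}
    (hsum : ∑ m ∈ s, e m = 1) {l : ι} (hl : l ∈ s) {a b : R}
    (h : ∀ m ∈ s, m ≠ l → a * e m * b = 0) : a * e l * b = a * b :=
  calc a * e l * b = ∑ m ∈ s, a * e m * b := (sum_eq_single_of_mem l hl h).symm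
    _ = a * b := by rw [← sum_mul, ← mul_sum, hsum, mul_one]

variable {d : ℕ} {e f : ℕ → R}

theorem mul_mul_self_eq_of_triangular (hsum : ∑ i ∈ range (d + 1), e i = 1)
    (hfe : ∀ i j, i < j → j ≤ d → f j * e i = 0) (hef : ∀ i j, i < j → j ≤ d → e j * f i = 0)
    {l : ℕ} (hl : l ≤ d) (hf : IsIdempotentElem (f l)) : f l * e l * f l = f l := by
  rw [mul_mul_eq_mul_of_sum_eq_one hsum (mem_range.2 (Nat.lt_succ_of_le hl)), hf.eq]
  intro m hm hml
  rcases lt_or_gt_of_ne hml with h | h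
  · rw [hfe m l h hl, zero_mul]
  · rw [mul_assoc, hef l m h (Nat.lt_succ_iff.1 (mem_range.1 hm)), mul_zero]

theorem sum_mul_mul_eq_of_orthogonal
    (hee : ∀ i ≤ d, ∀ j ≤ d, e i * e j = if i = j then e i else 0)
    (a : ℕ → R) {i : ℕ} (hi : i ≤ d) :
    (∑ l ∈ range (d + 1), a l * e l) * e i = a i * e i := by
  rw [sum_mul, sum_eq_single_of_mem i (mem_range.2 (Nat.lt_succ_of_le hi)),
    mul_assoc, hee i hi i hi, if_pos rfl]
  intro m hm hmi
  rw [mul_assoc, hee m (Nat.lt_succ_iff.1 (mem_range.1 hm)) i hi, if_neg hmi, mul_zero]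

theorem sum_mul_sum_eq_of_orthogonal
    (hee : ∀ i ≤ d, ∀ j ≤ d, e i * e j = if i = j then e i else 0) (a b : ℕ → R) :
    (∑ l ∈ range (d + 1), a l * e l) * (∑ l ∈ range (d + 1), e l * b l) =
      ∑ l ∈ range (d + 1), a l * e l * b l := by
  rw [mul_sum]
  refine sum_congr rfl fun l hl => ?_
  rw [← mul_assoc, sum_mul_mul_eq_of_orthogonal hee a (Nat.lt_succ_iff.1 (mem_range.1 hl))]

theorem sum_mul_sum_eq_one_of_triangular
    (hee : ∀ i ≤ d, ∀ j ≤ d, e i * e j = if i = j then e i else 0)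
    (hff : ∀ i ≤ d, ∀ j ≤ d, f i * f j = if i = j then f i else 0)
    (hesum : ∑ i ∈ range (d + 1), e i = 1) (hfsum : ∑ i ∈ range (d + 1), f i = 1)
    (hfe : ∀ i j, i < j → j ≤ d → f j * e i = 0) (hef : ∀ i j, i < j → j ≤ d → e j * f i = 0) :
    (∑ l ∈ range (d + 1), f l * e l) * (∑ l ∈ range (d + 1), e l * f l) = 1 := by
  rw [sum_mul_sum_eq_of_orthogonal hee, ← hfsum]
  refine sum_congr rfl fun l hl => ?_
  have hld := Nat.lt_succ_iff.1 (mem_range.1 hl)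
  exact mul_mul_self_eq_of_triangular hesum hfe hef hld
    (show f l * f l = f l by simpa using hff l hld l hld)

end Semiring

theorem LinearMap.range_mul_eq_of_mul_mul_eq {R M : Type*} [Semiring R] [AddCommMonoid M]
    [Module R M] {a b : Module.End R M} (h : a * b * a = a) : range (a * b) = range a :=
  le_antisymm (range_comp_le_range b a) <|
    calc range a = range (a * b * a) := by rw [h]
      _ ≤ range (a * b) := range_comp_le_range a (a * b)

theorem map_sum_mul_range_eq_of_triangular {K V : Type*} [Semiring K] [AddCommMonoid V]
    [Module K V] {d : ℕ} {e f : ℕ → Module.End K V}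
    (hee : ∀ i ≤ d, ∀ j ≤ d, e i * e j = if i = j then e i else 0)
    (hff : ∀ i ≤ d, ∀ j ≤ d, f i * f j = if i = j then f i else 0)
    (hesum : ∑ i ∈ range (d + 1), e i = 1)
    (hfe : ∀ i j, i < j → j ≤ d → f j * e i = 0) (hef : ∀ i j, i < j → j ≤ d → e j * f i = 0)
    {i : ℕ} (hi : i ≤ d) :
    Submodule.map (∑ l ∈ range (d + 1), f l * e l) (LinearMap.range (e i)) =
      LinearMap.range (f i) := by
  rw [← LinearMap.range_comp, ← Module.End.mul_eq_comp, sum_mul_mul_eq_of_orthogonal hee f hi]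
  exact LinearMap.range_mul_eq_of_mul_mul_eq
    (mul_mul_self_eq_of_triangular hesum hfe hef hi
      (show f i * f i = f i by simpa using hff i hi i hi))

theorem stmt0_general {F V : Type*} [Field F] [AddCommGroup V] [Module F V]
    (d : ℕ)
    (Es Fi : ℕ → Module.End F V)
    (hEsEs : ∀ i ≤ d, ∀ j ≤ d, Es i * Es j = if i = j then Es i else 0)
    (hFF : ∀ i ≤ d, ∀ j ≤ d, Fi i * Fi j = if i = j then Fi i else 0)
    (hEssum : ∑ i ∈ Finset.range (d + 1), Es i = 1)
    (hFsum : ∑ i ∈ Finset.range (d + 1), Fi i = 1)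
    (hFE : ∀ i j, i < j → j ≤ d → Fi j * Es i = 0)
    (hEF : ∀ i j, i < j → j ≤ d → Es j * Fi i = 0) :
    (∑ l ∈ Finset.range (d + 1), Fi l * Es l) *
        (∑ l ∈ Finset.range (d + 1), Es l * Fi l) = 1 ∧
    (∑ l ∈ Finset.range (d + 1), Es l * Fi l) *
        (∑ l ∈ Finset.range (d + 1), Fi l * Es l) = 1 ∧
    (∀ i ≤ d, Submodule.map (∑ l ∈ Finset.range (d + 1), Fi l * Es l)
        (LinearMap.range (Es i)) = LinearMap.range (Fi i)) ∧
    (∀ i ≤ d, Submodule.map (∑ l ∈ Finset.range (d + 1), Es l * Fi l)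
        (LinearMap.range (Fi i)) = LinearMap.range (Es i)) :=
  ⟨sum_mul_sum_eq_one_of_triangular hEsEs hFF hEssum hFsum hFE hEF,
    sum_mul_sum_eq_one_of_triangular hFF hEsEs hFsum hEssum hEF hFE,
    fun _ hi => map_sum_mul_range_eq_of_triangular hEsEs hFF hEssum hFE hEF hi,
    fun _ hi => map_sum_mul_range_eq_of_triangular hFF hEsEs hFsum hEF hFE hi⟩

/-- The maps `S = ∑ F_ℓ E*_ℓ` and `T = ∑ E*_ℓ F_ℓ` are mutually inverse
bijections; `S` sends `E*_i V` onto `F_i V` and `T` sends `F_i V` onto `E*_i V`. -/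
theorem stmt0 {F V : Type*} [Field F] [AddCommGroup V] [Module F V]
    [FiniteDimensional F V] [Nontrivial V] (d : ℕ) (hd : 1 ≤ d)
    (Es Fi : ℕ → Module.End F V)
    (hEsEs : ∀ i ≤ d, ∀ j ≤ d, Es i * Es j = if i = j then Es i else 0)
    (hFF : ∀ i ≤ d, ∀ j ≤ d, Fi i * Fi j = if i = j then Fi i else 0)
    (hEssum : ∑ i ∈ Finset.range (d + 1), Es i = 1)
    (hFsum : ∑ i ∈ Finset.range (d + 1), Fi i = 1)
    (hFE : ∀ i j, i < j → j ≤ d → Fi j * Es i = 0)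
    (hEF : ∀ i j, i < j → j ≤ d → Es j * Fi i = 0) :
    (∑ l ∈ Finset.range (d + 1), Fi l * Es l) *
        (∑ l ∈ Finset.range (d + 1), Es l * Fi l) = 1 ∧
    (∑ l ∈ Finset.range (d + 1), Es l * Fi l) *
        (∑ l ∈ Finset.range (d + 1), Fi l * Es l) = 1 ∧
    (∀ i ≤ d, Submodule.map (∑ l ∈ Finset.range (d + 1), Fi l * Es l)
        (LinearMap.range (Es i)) = LinearMap.range (Fi i)) ∧
    (∀ i ≤ d, Submodule.map (∑ l ∈ Finset.range (d + 1), Es l * Fi l)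
        (LinearMap.range (Fi i)) = LinearMap.range (Es i)) :=
  stmt0_general d Es Fi hEsEs hFF hEssum hFsum hFE hEF
end

section
/- For 0 \le i \le d one has F_i E^*_i F_i = F_i and E^*_i F_i E^*_i = E^*_i. -/
open Finset

theorem IsIdempotentElem.mul_mul_self_of_sum_eq_one {R : Type*} [Semiring R] {p : R}
    (hp : IsIdempotentElem p) {e : ℕ → R} {n i : ℕ} (hsum : ∑ j ∈ range (n + 1), e j = 1)
    (hi : i ≤ n) (hlow : ∀ j < i, p * e j = 0) (hhigh : ∀ j, i < j → j ≤ n → e j * p = 0) :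
    p * e i * p = p := by
  have hvanish : ∀ j ∈ range (n + 1), j ≠ i → p * e j * p = 0 := by
    intro j hj hne
    rcases hne.lt_or_gt with hlt | hgt
    · rw [hlow j hlt, zero_mul]
    · rw [mul_assoc, hhigh j hgt (Nat.lt_succ_iff.mp (mem_range.mp hj)), mul_zero]
  calc p * e i * p = ∑ j ∈ range (n + 1), p * e j * p :=
        (sum_eq_single_of_mem i (mem_range.mpr (Nat.lt_succ_of_le hi)) hvanish).symm
    _ = p := by rw [← sum_mul, ← mul_sum, hsum, mul_one, hp.eq]

theorem stmt1_general {F V : Type*} [Field F] [AddCommGroup V] [Module F V]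
    (d : ℕ)
    (Es Fi : ℕ → Module.End F V)
    (hEsEs : ∀ i ≤ d, ∀ j ≤ d, Es i * Es j = if i = j then Es i else 0)
    (hFF : ∀ i ≤ d, ∀ j ≤ d, Fi i * Fi j = if i = j then Fi i else 0)
    (hEssum : ∑ i ∈ Finset.range (d + 1), Es i = 1)
    (hFsum : ∑ i ∈ Finset.range (d + 1), Fi i = 1)
    (hFE : ∀ i j, i < j → j ≤ d → Fi j * Es i = 0)
    (hEF : ∀ i j, i < j → j ≤ d → Es j * Fi i = 0) :
    ∀ i ≤ d, Fi i * Es i * Fi i = Fi i ∧ Es i * Fi i * Es i = Es i := by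
  intro i hi
  have hFi : IsIdempotentElem (Fi i) := by simpa [IsIdempotentElem] using hFF i hi i hi
  have hEi : IsIdempotentElem (Es i) := by simpa [IsIdempotentElem] using hEsEs i hi i hi
  exact ⟨hFi.mul_mul_self_of_sum_eq_one hEssum hi (fun j hj => hFE j i hj hi)
      (fun j hij hj => hEF i j hij hj),
    hEi.mul_mul_self_of_sum_eq_one hFsum hi (fun j hj => hEF j i hj hi)
      (fun j hij hj => hFE i j hij hj)⟩

/-- For `0 ≤ i ≤ d` one has `F_i E*_i F_i = F_i` and `E*_i F_i E*_i = E*_i`. -/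
theorem stmt1 {F V : Type*} [Field F] [AddCommGroup V] [Module F V]
    [FiniteDimensional F V] [Nontrivial V] (d : ℕ) (hd : 1 ≤ d)
    (Es Fi : ℕ → Module.End F V)
    (hEsEs : ∀ i ≤ d, ∀ j ≤ d, Es i * Es j = if i = j then Es i else 0)
    (hFF : ∀ i ≤ d, ∀ j ≤ d, Fi i * Fi j = if i = j then Fi i else 0)
    (hEssum : ∑ i ∈ Finset.range (d + 1), Es i = 1)
    (hFsum : ∑ i ∈ Finset.range (d + 1), Fi i = 1)
    (hFE : ∀ i j, i < j → j ≤ d → Fi j * Es i = 0)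
    (hEF : ∀ i j, i < j → j ≤ d → Es j * Fi i = 0) :
    ∀ i ≤ d, Fi i * Es i * Fi i = Fi i ∧ Es i * Fi i * Es i = Es i :=
  stmt1_general d Es Fi hEsEs hFF hEssum hFsum hFE hEF
end

section
/- For 0 \le i < j \le d one has F_i E^*_j = (\theta^*_j - \theta^*_i)^{-1} \mathcal{L} F_{i+1} E^*_j. -/
/-! Sandwiching `𝓛 = A* - ∑ θ*_k F_k` between `F_i` and `E*_j` gives
`F_i 𝓛 E*_j = (θ*_j - θ*_i) F_i E*_j`, since `E*_j` is a right eigenvector of `A*` and `F_i`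
a left eigenvector of `∑ θ*_k F_k`; and `F_i 𝓛 = 𝓛 F_{i+1}`. -/

section OrthogonalIdempotents

variable {R A ι : Type*} [CommSemiring R] [Semiring A] [Algebra R A] [DecidableEq ι]
  {s : Finset ι} {e : ι → A}

theorem Finset.sum_smul_mul_of_orthogonal (c : ι → R) {j : ι} (hj : j ∈ s)
    (he : ∀ k ∈ s, e k * e j = if k = j then e k else 0) :
    (∑ k ∈ s, c k • e k) * e j = c j • e j := by
  rw [Finset.sum_mul, Finset.sum_eq_single_of_mem j hj, smul_mul_assoc, he j hj, if_pos rfl]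
  intro k hk hkj
  rw [smul_mul_assoc, he k hk, if_neg hkj, smul_zero]

theorem Finset.mul_sum_smul_of_orthogonal (c : ι → R) {i : ι} (hi : i ∈ s)
    (he : ∀ k ∈ s, e i * e k = if i = k then e i else 0) :
    e i * (∑ k ∈ s, c k • e k) = c i • e i := by
  rw [Finset.mul_sum, Finset.sum_eq_single_of_mem i hi, mul_smul_comm, he i hi, if_pos rfl]
  intro k hk hki
  rw [mul_smul_comm, he k hk, if_neg (Ne.symm hki), smul_zero]

end OrthogonalIdempotents

theorem mul_sub_mul_eq_sub_smul {R A : Type*} [CommRing R] [Ring A] [Algebra R A]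
    {a b e f : A} {μ ν : R} (ha : a * e = μ • e) (hb : f * b = ν • f) :
    f * (a - b) * e = (μ - ν) • (f * e) := by
  rw [mul_sub, sub_mul, mul_assoc, ha, hb, mul_smul_comm, smul_mul_assoc, sub_smul]

theorem stmt2_general {F V : Type*} [Field F] [AddCommGroup V] [Module F V]
    (d : ℕ)
    (As : Module.End F V) (Es Fi : ℕ → Module.End F V) (θs : ℕ → F)
    (hEsEs : ∀ i ≤ d, ∀ j ≤ d, Es i * Es j = if i = j then Es i else 0)
    (hAs : As = ∑ i ∈ Finset.range (d + 1), θs i • Es i)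
    (hdist : ∀ i ≤ d, ∀ j ≤ d, i ≠ j → θs i ≠ θs j)
    (hFF : ∀ i ≤ d, ∀ j ≤ d, Fi i * Fi j = if i = j then Fi i else 0)
    (L : Module.End F V)
    (hL : L = As - ∑ i ∈ Finset.range (d + 1), θs i • Fi i)
    (hFL : ∀ i, i + 1 ≤ d → Fi i * L = L * Fi (i + 1)) :
    ∀ i j, i < j → j ≤ d →
      Fi i * Es j = (θs j - θs i)⁻¹ • (L * (Fi (i + 1) * Es j)) := by
  intro i j hij hj
  have hi : i ≤ d := hij.le.trans hj
  have hAE : As * Es j = θs j • Es j := hAs ▸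
    Finset.sum_smul_mul_of_orthogonal θs (Finset.mem_range_succ_iff.mpr hj)
      fun k hk ↦ hEsEs k (Finset.mem_range_succ_iff.mp hk) j hj
  have hFS : Fi i * ∑ k ∈ Finset.range (d + 1), θs k • Fi k = θs i • Fi i :=
    Finset.mul_sum_smul_of_orthogonal θs (Finset.mem_range_succ_iff.mpr hi)
      fun k hk ↦ hFF i hi k (Finset.mem_range_succ_iff.mp hk)
  have key : (θs j - θs i) • (Fi i * Es j) = L * (Fi (i + 1) * Es j) := by
    rw [← mul_sub_mul_eq_sub_smul hAE hFS, ← hL, hFL i (hij.trans_le hj), mul_assoc]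
  rw [← key, inv_smul_smul₀ (sub_ne_zero.mpr (hdist j hj i hi hij.ne'))]

/-- For `0 ≤ i < j ≤ d`, `F_i E*_j = (θ*_j - θ*_i)⁻¹ 𝓛 F_{i+1} E*_j`. -/
theorem stmt2 {F V : Type*} [Field F] [AddCommGroup V] [Module F V]
    [FiniteDimensional F V] (d : ℕ) (hd : 1 ≤ d)
    (As : Module.End F V) (Es Fi : ℕ → Module.End F V) (θs : ℕ → F)
    (hEsEs : ∀ i ≤ d, ∀ j ≤ d, Es i * Es j = if i = j then Es i else 0)
    (hEssum : ∑ i ∈ Finset.range (d + 1), Es i = 1)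
    (hAs : As = ∑ i ∈ Finset.range (d + 1), θs i • Es i)
    (hdist : ∀ i ≤ d, ∀ j ≤ d, i ≠ j → θs i ≠ θs j)
    (hFF : ∀ i ≤ d, ∀ j ≤ d, Fi i * Fi j = if i = j then Fi i else 0)
    (hFsum : ∑ i ∈ Finset.range (d + 1), Fi i = 1)
    (L : Module.End F V)
    (hL : L = As - ∑ i ∈ Finset.range (d + 1), θs i • Fi i)
    (hFL : ∀ i, i + 1 ≤ d → Fi i * L = L * Fi (i + 1)) :
    ∀ i j, i < j → j ≤ d →
      Fi i * Es j = (θs j - θs i)⁻¹ • (L * (Fi (i + 1) * Es j)) :=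
  stmt2_general d As Es Fi θs hEsEs hAs hdist hFF L hL hFL
end

section
/- For 0 \le j \le d-1 one has F_{j+1} E^*_{j+1} A E^*_j = \mathcal{R} F_j E^*_j; equivalently, the diagram with horizontal maps R : E^*_jV \to E^*_{j+1}V and \mathcal{R} : F_jV \to F_{j+1}V and vertical maps \sum_\ell F_\ell E^*_\ell commutes. -/
/-!
Every `E*_j V` lies in `F_0 V + ⋯ + F_j V`, and on `F_m V` the map `A` acts as `θ_m` plus
the raising map `𝓡 : F_m V → F_{m+1} V`. The projection `F_{j+1} E*_{j+1}` kills
`F_0 V, …, F_j V` and is the identity on `F_{j+1} V`, so of `A E*_j` it only sees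
`𝓡 F_j E*_j`. The diagram form follows since `∑ F_ℓ E*_ℓ` acts as `F_ℓ` on `E*_ℓ V`.
-/

open Finset

namespace TridiagonalSystem

section Ring

variable {R : Type*} [Ring R] {d : ℕ}

theorem sum_mul_mul_eq_of_orthogonal {E : ℕ → R}
    (hE : ∀ i ≤ d, ∀ j ≤ d, E i * E j = if i = j then E i else 0)
    (a : ℕ → R) {n j : ℕ} (hn : n ≤ d + 1) (hj : j < n) :
    (∑ i ∈ range n, a i * E i) * E j = a j * E j := by
  rw [sum_mul, sum_eq_single_of_mem j (mem_range.2 hj)]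
  · rw [mul_assoc, hE j (by omega) j (by omega), if_pos rfl]
  · intro i hi hij
    rw [mul_assoc, hE i (by rw [mem_range] at hi; omega) j (by omega), if_neg hij, mul_zero]

variable {E F : ℕ → R}

theorem eq_sum_range_mul_of_flag (hF : ∑ m ∈ range (d + 1), F m = 1)
    (hFE : ∀ i j, i < j → j ≤ d → F j * E i = 0) {i : ℕ} (hi : i ≤ d) :
    E i = ∑ m ∈ range (i + 1), F m * E i := by
  calc E i = ∑ m ∈ range (d + 1), F m * E i := by rw [← sum_mul, hF, one_mul]
    _ = ∑ m ∈ range (i + 1), F m * E i := by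
      refine (sum_subset (range_subset_range.2 (by omega)) fun m hm hmi => ?_).symm
      rw [mem_range] at hm hmi
      exact hFE i m (by omega) (by omega)

theorem mul_mul_self_eq_of_flag (hE : ∑ l ∈ range (d + 1), E l = 1)
    (hFF : ∀ i ≤ d, ∀ j ≤ d, F i * F j = if i = j then F i else 0)
    (hFE : ∀ i j, i < j → j ≤ d → F j * E i = 0)
    (hEF : ∀ i j, i < j → j ≤ d → E j * F i = 0) {i : ℕ} (hi : i ≤ d) :
    F i * E i * F i = F i := by
  calc F i * E i * F i = ∑ l ∈ range (d + 1), F i * E l * F i := by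
        rw [sum_eq_single_of_mem i (mem_range.2 (Nat.lt_succ_of_le hi))]
        intro l hl hli
        rw [mem_range] at hl
        rcases lt_or_gt_of_ne hli with hlt | hgt
        · rw [hFE l i hlt hi, zero_mul]
        · rw [mul_assoc, hEF i l hgt (by omega), mul_zero]
    _ = F i * F i := by rw [← sum_mul, ← mul_sum, hE, mul_one]
    _ = F i := by rw [hFF i hi i hi, if_pos rfl]

variable {K : Type*} [CommSemiring K] [Algebra K R] {θ : ℕ → K} {A cR : R}

theorem mul_eq_smul_add_of_raising
    (hFF : ∀ i ≤ d, ∀ j ≤ d, F i * F j = if i = j then F i else 0)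
    (hcR : cR = A - ∑ i ∈ range (d + 1), θ i • F i)
    (hFAF : ∀ i < d, F (i + 1) * A * F i = cR * F i) {m : ℕ} (hm : m < d) :
    A * F m = θ m • F m + F (m + 1) * A * F m := by
  rw [hFAF m hm, hcR, sub_mul]
  simp only [Algebra.smul_def]
  rw [sum_mul_mul_eq_of_orthogonal hFF (fun i => algebraMap K R (θ i)) le_rfl (by omega)]
  abel

theorem mul_mul_mul_eq_raising_mul (hE : ∑ l ∈ range (d + 1), E l = 1)
    (hF : ∑ m ∈ range (d + 1), F m = 1)
    (hFF : ∀ i ≤ d, ∀ j ≤ d, F i * F j = if i = j then F i else 0)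
    (hFE : ∀ i j, i < j → j ≤ d → F j * E i = 0)
    (hEF : ∀ i j, i < j → j ≤ d → E j * F i = 0)
    (hcR : cR = A - ∑ i ∈ range (d + 1), θ i • F i)
    (hFAF : ∀ i < d, F (i + 1) * A * F i = cR * F i) {j : ℕ} (hj : j < d) :
    F (j + 1) * E (j + 1) * A * E j = cR * (F j * E j) := by
  set P := F (j + 1) * E (j + 1)
  have hPF : ∀ m ≤ j, P * F m = 0 := fun m hm => by
    rw [mul_assoc, hEF m (j + 1) (by omega) hj, mul_zero]
  have hPAF : ∀ m ≤ j, P * A * F m = P * F (m + 1) * A * F m := fun m hm => by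
    rw [mul_assoc P A, mul_eq_smul_add_of_raising hFF hcR hFAF (by omega), mul_add,
      mul_smul_comm, hPF m hm, smul_zero, zero_add]
    simp only [mul_assoc]
  calc P * A * E j = ∑ m ∈ range (j + 1), P * A * F m * E j := by
        conv_lhs => rw [eq_sum_range_mul_of_flag hF hFE hj.le]
        simp only [mul_sum, mul_assoc]
    _ = P * A * F j * E j := by
        refine sum_eq_single_of_mem j (self_mem_range_succ j) fun m hm hmj => ?_
        rw [mem_range] at hm
        rw [hPAF m (by omega), hPF (m + 1) (by omega), zero_mul, zero_mul, zero_mul]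
    _ = cR * (F j * E j) := by
        rw [hPAF j le_rfl, mul_mul_self_eq_of_flag hE hFF hFE hEF hj, hFAF j hj, mul_assoc]

end Ring

end TridiagonalSystem

open TridiagonalSystem

theorem stmt8_general {F V : Type*} [Field F] [AddCommGroup V] [Module F V]
    (d : ℕ)
    (A : Module.End F V) (Es Fi : ℕ → Module.End F V) (θ : ℕ → F)
    (cR R : Module.End F V)
    (hEsEs : ∀ i ≤ d, ∀ j ≤ d, Es i * Es j = if i = j then Es i else 0)
    (hFF : ∀ i ≤ d, ∀ j ≤ d, Fi i * Fi j = if i = j then Fi i else 0)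
    (hEssum : ∑ i ∈ Finset.range (d + 1), Es i = 1)
    (hFsum : ∑ i ∈ Finset.range (d + 1), Fi i = 1)
    (hFE0 : ∀ i j, i < j → j ≤ d → Fi j * Es i = 0)
    (hEF0 : ∀ i j, i < j → j ≤ d → Es j * Fi i = 0)
    (hcR : cR = A - ∑ i ∈ Finset.range (d + 1), θ i • Fi i)
    (hFAF1 : ∀ i < d, Fi (i + 1) * A * Fi i = cR * Fi i)
    (hR : R = ∑ i ∈ Finset.range d, Es (i + 1) * A * Es i) :
    ∀ j < d, Fi (j + 1) * Es (j + 1) * A * Es j = cR * (Fi j * Es j) ∧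
      (∑ l ∈ Finset.range (d + 1), Fi l * Es l) * R * Es j =
        cR * (∑ l ∈ Finset.range (d + 1), Fi l * Es l) * Es j := by
  intro j hj
  have key := mul_mul_mul_eq_raising_mul hEssum hFsum hFF hFE0 hEF0 hcR hFAF1 hj
  have hRE : R * Es j = Es (j + 1) * A * Es j := by
    rw [hR, sum_mul_mul_eq_of_orthogonal hEsEs (fun i => Es (i + 1) * A) (by omega) hj]
  refine ⟨key, ?_⟩
  calc (∑ l ∈ Finset.range (d + 1), Fi l * Es l) * R * Es j
      = (∑ l ∈ Finset.range (d + 1), Fi l * Es l) * Es (j + 1) * A * Es j := by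
        rw [mul_assoc _ R, hRE]
        simp only [mul_assoc]
    _ = cR * (Fi j * Es j) := by
        rw [sum_mul_mul_eq_of_orthogonal hEsEs _ le_rfl (by omega), key]
    _ = cR * (∑ l ∈ Finset.range (d + 1), Fi l * Es l) * Es j := by
        rw [mul_assoc, sum_mul_mul_eq_of_orthogonal hEsEs _ le_rfl (by omega)]

/-- For `0 ≤ j ≤ d-1`, `F_{j+1} E*_{j+1} A E*_j = 𝓡 F_j E*_j`;
equivalently the diagram with horizontal maps `R : E*_jV → E*_{j+1}V`,
`𝓡 : F_jV → F_{j+1}V` and vertical maps `∑ F_ℓ E*_ℓ` commutes. -/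
theorem stmt8 {F V : Type*} [Field F] [AddCommGroup V] [Module F V]
    [FiniteDimensional F V] (d : ℕ) (hd : 1 ≤ d)
    (A As : Module.End F V) (Es Fi : ℕ → Module.End F V) (θ θs : ℕ → F)
    (cR cL R : Module.End F V)
    (hEsEs : ∀ i ≤ d, ∀ j ≤ d, Es i * Es j = if i = j then Es i else 0)
    (hFF : ∀ i ≤ d, ∀ j ≤ d, Fi i * Fi j = if i = j then Fi i else 0)
    (hEssum : ∑ i ∈ Finset.range (d + 1), Es i = 1)
    (hFsum : ∑ i ∈ Finset.range (d + 1), Fi i = 1)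
    (hFE0 : ∀ i j, i < j → j ≤ d → Fi j * Es i = 0)
    (hEF0 : ∀ i j, i < j → j ≤ d → Es j * Fi i = 0)
    (hcR : cR = A - ∑ i ∈ Finset.range (d + 1), θ i • Fi i)
    (hcL : cL = As - ∑ i ∈ Finset.range (d + 1), θs i • Fi i)
    (hFAF1 : ∀ i < d, Fi (i + 1) * A * Fi i = cR * Fi i)
    (hFAF1' : ∀ i < d, Fi (i + 1) * A * Fi i = Fi (i + 1) * cR)
    (hFAF0 : ∀ i ≤ d, Fi i * A * Fi i = θ i • Fi i)
    (hFAsF1 : ∀ i, 1 ≤ i → i ≤ d → Fi (i - 1) * As * Fi i = cL * Fi i)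
    (hFAsF1' : ∀ i, 1 ≤ i → i ≤ d → Fi (i - 1) * As * Fi i = Fi (i - 1) * cL)
    (hFAsF0 : ∀ i ≤ d, Fi i * As * Fi i = θs i • Fi i)
    (hR : R = ∑ i ∈ Finset.range d, Es (i + 1) * A * Es i) :
    ∀ j < d, Fi (j + 1) * Es (j + 1) * A * Es j = cR * (Fi j * Es j) ∧
      (∑ l ∈ Finset.range (d + 1), Fi l * Es l) * R * Es j =
        cR * (∑ l ∈ Finset.range (d + 1), Fi l * Es l) * Es j :=
  stmt8_general d A Es Fi θ cR R hEsEs hFF hEssum hFsum hFE0 hEF0 hcR hFAF1 hR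
end

section
/- (General expansion formula.) For 0 \le i, j \le d, F_i E^*_i A E^*_j equals the sum over i \le s \le j of \theta_s \mathcal{L}^{s-i}/\prod_{k=i+1}^{s}(\theta^*_i-\theta^*_k) \cdot \mathcal{L}^{j-s}/\prod_{k=s}^{j-1}(\theta^*_j-\theta^*_k) \, F_jE^*_j, plus the sum over pairs (r,s) with i \le r \le d, 0 \le s \le j, r - s = 1, of \mathcal{L}^{r-i}/\prod_{k=i+1}^{r}(\theta^*_i-\theta^*_k) \cdot \mathcal{R} \cdot \mathcal{L}^{j-s}/\prod_{k=s}^{j-1}(\theta^*_j-\theta^*_k)\, F_jE^*_j. -/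
/-!
Insert the resolution of the identity `∑ s, F_s = 1` to the right of `A`. Since `A` maps
`F_s V` into `F_s V + F_{s+1} V`, the block `A F_s` is `θ_s F_s + 𝓡 F_s`, where
`𝓡 F_s = F_{s+1} A F_s`. On each side the split idempotents are then traded for powers of `𝓛`:
`F_s E^*_j` is a multiple of `𝓛^{j-s} F_j E^*_j`, and `F_i E^*_i F_r` is a multiple of
`𝓛^{r-i} F_r`. The leftover `F_i` in front is absorbed, because `𝓛^{m-a} F_m E^*_m` is a nonzero
multiple of `F_a E^*_m`, so it lies in the image of the idempotent `F_a`.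
-/

open Finset

theorem IsIdempotentElem.mul_eq_self_of_eq_smul_mul {K R : Type*} [CommSemiring K] [Semiring R]
    [Algebra K R] {p x y : R} {c : K} (hp : IsIdempotentElem p) (h : x = c • (p * y)) :
    p * x = x := by
  rw [h, mul_smul_comm, ← mul_assoc, hp.eq]

theorem prod_Ico_sub_ne_zero {K : Type*} [Field K] {d a b : ℕ} {θ : ℕ → K}
    (hθ : Set.InjOn θ (Set.Iic d)) (hb : b ≤ d) : ∏ k ∈ Ico a b, (θ b - θ k) ≠ 0 := by
  refine prod_ne_zero_iff.mpr fun k hk => sub_ne_zero.mpr fun h => ?_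
  have hkb := (mem_Ico.mp hk).2
  exact hkb.ne' (hθ (Set.mem_Iic.mpr hb) (Set.mem_Iic.mpr (hkb.le.trans hb)) h)

namespace SplitDecomposition

variable {K R : Type*} [Field K] [Ring R] [Algebra K R] {d : ℕ} {Es Fi : ℕ → R} {θs : ℕ → K}
  {cL : R}

theorem Fi_mul_pow_mul_Fi_mul (hFidem : ∀ i ≤ d, IsIdempotentElem (Fi i))
    (hθs : Set.InjOn θs (Set.Iic d)) (hFEF : ∀ i ≤ d, Fi i * Es i * Fi i = Fi i)
    (hFE : ∀ i j, i ≤ j → j ≤ d →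
      Fi i * Es j = (∏ k ∈ Ico i j, (θs j - θs k))⁻¹ • (cL ^ (j - i) * (Fi j * Es j)))
    {a m : ℕ} (ham : a ≤ m) (hm : m ≤ d) (X : R) :
    Fi a * (cL ^ (m - a) * (Fi m * X)) = cL ^ (m - a) * (Fi m * X) := by
  have hmultiple : cL ^ (m - a) * (Fi m * Es m) =
      (∏ k ∈ Ico a m, (θs m - θs k)) • (Fi a * Es m) := by
    rw [hFE a m ham hm, smul_smul, mul_inv_cancel₀ (prod_Ico_sub_ne_zero hθs hm), one_smul]
  have hsplit : cL ^ (m - a) * (Fi m * X) = cL ^ (m - a) * (Fi m * Es m) * (Fi m * X) := by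
    conv_lhs => rw [← hFEF m hm]
    simp only [mul_assoc]
  rw [hsplit, ← mul_assoc, (hFidem a (ham.trans hm)).mul_eq_self_of_eq_smul_mul hmultiple]

theorem Fi_mul_Es_mul_Fi_mul (hFidem : ∀ i ≤ d, IsIdempotentElem (Fi i))
    (hθs : Set.InjOn θs (Set.Iic d)) (hFEF : ∀ i ≤ d, Fi i * Es i * Fi i = Fi i)
    (hFE : ∀ i j, i ≤ j → j ≤ d →
      Fi i * Es j = (∏ k ∈ Ico i j, (θs j - θs k))⁻¹ • (cL ^ (j - i) * (Fi j * Es j)))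
    (hEF : ∀ i j, i ≤ j → j ≤ d →
      Es i * Fi j = (∏ k ∈ Ioc i j, (θs i - θs k))⁻¹ • (Es i * Fi i * cL ^ (j - i)))
    {i r : ℕ} (hir : i ≤ r) (hr : r ≤ d) (X : R) :
    Fi i * Es i * Fi r * X =
      (∏ k ∈ Ioc i r, (θs i - θs k))⁻¹ • (cL ^ (r - i) * (Fi r * X)) := by
  calc Fi i * Es i * Fi r * X = Fi i * (Es i * Fi r) * (Fi r * X) := by
        conv_lhs => rw [← (hFidem r hr).eq]
        simp only [mul_assoc]
    _ = (∏ k ∈ Ioc i r, (θs i - θs k))⁻¹ •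
          (Fi i * Es i * Fi i * (cL ^ (r - i) * (Fi r * X))) := by
        rw [hEF i r hir hr]
        simp only [mul_smul_comm, smul_mul_assoc, mul_assoc]
    _ = _ := by
        rw [hFEF i (hir.trans hr), Fi_mul_pow_mul_Fi_mul hFidem hθs hFEF hFE hir hr]

theorem Fi_mul_Es_mul_Fi_mul_Es (hFidem : ∀ i ≤ d, IsIdempotentElem (Fi i))
    (hθs : Set.InjOn θs (Set.Iic d)) (hFE0 : ∀ i j, i < j → j ≤ d → Fi j * Es i = 0)
    (hEF0 : ∀ i j, i < j → j ≤ d → Es j * Fi i = 0) (hFEF : ∀ i ≤ d, Fi i * Es i * Fi i = Fi i)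
    (hFE : ∀ i j, i ≤ j → j ≤ d →
      Fi i * Es j = (∏ k ∈ Ico i j, (θs j - θs k))⁻¹ • (cL ^ (j - i) * (Fi j * Es j)))
    (hEF : ∀ i j, i ≤ j → j ≤ d →
      Es i * Fi j = (∏ k ∈ Ioc i j, (θs i - θs k))⁻¹ • (Es i * Fi i * cL ^ (j - i)))
    {i j s : ℕ} (hi : i ≤ d) (hj : j ≤ d) (hs : s ≤ d) :
    Fi i * Es i * Fi s * Es j =
      if s ∈ Icc i j then
        ((∏ k ∈ Ioc i s, (θs i - θs k))⁻¹ * (∏ k ∈ Ico s j, (θs j - θs k))⁻¹) •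
          (cL ^ (s - i) * cL ^ (j - s) * (Fi j * Es j))
      else 0 := by
  split_ifs with hmem
  · obtain ⟨his, hsj⟩ := mem_Icc.mp hmem
    rw [Fi_mul_Es_mul_Fi_mul hFidem hθs hFEF hFE hEF his hs, hFE s j hsj hj, mul_smul_comm,
      smul_smul, mul_assoc]
  · rcases (not_and_or.mp (mt mem_Icc.mpr hmem)) with hsi | hjs
    · rw [mul_assoc (Fi i), hEF0 s i (not_le.mp hsi) hi, mul_zero, zero_mul]
    · rw [mul_assoc, hFE0 j s (not_le.mp hjs) hs, mul_zero]

theorem Fi_mul_Es_mul_cR_mul_Fi_mul_Es {A cR : R} (hFidem : ∀ i ≤ d, IsIdempotentElem (Fi i))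
    (hθs : Set.InjOn θs (Set.Iic d)) (hFE0 : ∀ i j, i < j → j ≤ d → Fi j * Es i = 0)
    (hEF0 : ∀ i j, i < j → j ≤ d → Es j * Fi i = 0) (hFEF : ∀ i ≤ d, Fi i * Es i * Fi i = Fi i)
    (hFAF1 : ∀ s < d, Fi (s + 1) * A * Fi s = cR * Fi s)
    (hFE : ∀ i j, i ≤ j → j ≤ d →
      Fi i * Es j = (∏ k ∈ Ico i j, (θs j - θs k))⁻¹ • (cL ^ (j - i) * (Fi j * Es j)))
    (hEF : ∀ i j, i ≤ j → j ≤ d →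
      Es i * Fi j = (∏ k ∈ Ioc i j, (θs i - θs k))⁻¹ • (Es i * Fi i * cL ^ (j - i)))
    {i j s : ℕ} (hi : i ≤ d) (hj : j ≤ d) (hs : s < d) :
    Fi i * Es i * (cR * Fi s) * Es j =
      if s ∈ (range (j + 1)).filter (fun s => i ≤ s + 1 ∧ s + 1 ≤ d) then
        ((∏ k ∈ Ioc i (s + 1), (θs i - θs k))⁻¹ * (∏ k ∈ Ico s j, (θs j - θs k))⁻¹) •
          (cL ^ (s + 1 - i) * cR * cL ^ (j - s) * (Fi j * Es j))
      else 0 := by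
  have hraise :
      Fi i * Es i * (cR * Fi s) * Es j = Fi i * Es i * Fi (s + 1) * (A * Fi s * Es j) := by
    rw [← hFAF1 s hs]
    simp only [mul_assoc]
  rw [hraise]
  split_ifs with hmem
  · obtain ⟨hsj, his, -⟩ : s < j + 1 ∧ i ≤ s + 1 ∧ s + 1 ≤ d := by
      simpa only [mem_filter, mem_range, and_assoc] using hmem
    have hlower : Fi (s + 1) * (A * Fi s * Es j) = cR * (Fi s * Es j) := by
      rw [← mul_assoc, ← mul_assoc, hFAF1 s hs, mul_assoc]
    rw [Fi_mul_Es_mul_Fi_mul hFidem hθs hFEF hFE hEF his hs, hlower,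
      hFE s j (Nat.lt_succ_iff.mp hsj) hj]
    simp only [mul_smul_comm, smul_smul, mul_assoc]
  · simp only [mem_filter, mem_range, not_and_or, not_lt, not_le] at hmem
    rcases hmem with hjs | hsi | hsd
    · rw [mul_assoc A, hFE0 j s hjs hs.le, mul_zero, mul_zero]
    · rw [mul_assoc (Fi i), hEF0 (s + 1) i hsi hi, mul_zero, zero_mul]
    · omega

theorem mul_Fi_eq {A cR : R} {θ : ℕ → K} (hFsum : ∑ i ∈ range (d + 1), Fi i = 1)
    (hblockA : ∀ i ≤ d, ∀ j ≤ d, i ≠ j → i ≠ j + 1 → Fi i * A * Fi j = 0)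
    (hFAF1 : ∀ s < d, Fi (s + 1) * A * Fi s = cR * Fi s)
    (hFAF0 : ∀ s ≤ d, Fi s * A * Fi s = θ s • Fi s) {s : ℕ} (hs : s ≤ d) :
    A * Fi s = θ s • Fi s + if s < d then cR * Fi s else 0 := by
  have hexpand : A * Fi s = ∑ r ∈ range (d + 1), Fi r * A * Fi s := by
    rw [← sum_mul, ← sum_mul, hFsum, one_mul]
  rw [hexpand]
  split_ifs with hsd
  · rw [← sum_subset (s₁ := {s, s + 1}), sum_pair (Nat.ne_add_one s), hFAF0 s hs, hFAF1 s hsd]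
    · intro r hr
      simp only [mem_insert, mem_singleton] at hr
      rw [mem_range]
      omega
    · intro r hr hrs
      simp only [mem_insert, mem_singleton, not_or] at hrs
      exact hblockA r (Nat.lt_succ_iff.mp (mem_range.mp hr)) s hs hrs.1 hrs.2
  · rw [sum_eq_single s, hFAF0 s hs, add_zero]
    · intro r hr hrs
      exact hblockA r (Nat.lt_succ_iff.mp (mem_range.mp hr)) s hs hrs (by
        have := mem_range.mp hr; omega)
    · exact fun h => absurd (mem_range.mpr (Nat.lt_succ_of_le hs)) h

theorem Fi_mul_Es_mul_mul_Fi_mul_Es {A cR : R} {θ : ℕ → K}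
    (hFidem : ∀ i ≤ d, IsIdempotentElem (Fi i)) (hFsum : ∑ i ∈ range (d + 1), Fi i = 1)
    (hθs : Set.InjOn θs (Set.Iic d)) (hFE0 : ∀ i j, i < j → j ≤ d → Fi j * Es i = 0)
    (hEF0 : ∀ i j, i < j → j ≤ d → Es j * Fi i = 0) (hFEF : ∀ i ≤ d, Fi i * Es i * Fi i = Fi i)
    (hblockA : ∀ i ≤ d, ∀ j ≤ d, i ≠ j → i ≠ j + 1 → Fi i * A * Fi j = 0)
    (hFAF1 : ∀ s < d, Fi (s + 1) * A * Fi s = cR * Fi s)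
    (hFAF0 : ∀ s ≤ d, Fi s * A * Fi s = θ s • Fi s)
    (hFE : ∀ i j, i ≤ j → j ≤ d →
      Fi i * Es j = (∏ k ∈ Ico i j, (θs j - θs k))⁻¹ • (cL ^ (j - i) * (Fi j * Es j)))
    (hEF : ∀ i j, i ≤ j → j ≤ d →
      Es i * Fi j = (∏ k ∈ Ioc i j, (θs i - θs k))⁻¹ • (Es i * Fi i * cL ^ (j - i)))
    {i j s : ℕ} (hi : i ≤ d) (hj : j ≤ d) (hs : s ≤ d) :
    Fi i * Es i * (A * Fi s) * Es j =
      (if s ∈ Icc i j then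
        (θ s * (∏ k ∈ Ioc i s, (θs i - θs k))⁻¹ * (∏ k ∈ Ico s j, (θs j - θs k))⁻¹) •
          (cL ^ (s - i) * cL ^ (j - s) * (Fi j * Es j))
      else 0) +
      if s ∈ (range (j + 1)).filter (fun s => i ≤ s + 1 ∧ s + 1 ≤ d) then
        ((∏ k ∈ Ioc i (s + 1), (θs i - θs k))⁻¹ * (∏ k ∈ Ico s j, (θs j - θs k))⁻¹) •
          (cL ^ (s + 1 - i) * cR * cL ^ (j - s) * (Fi j * Es j))
      else 0 := by
  rw [mul_Fi_eq hFsum hblockA hFAF1 hFAF0 hs, mul_add, add_mul, mul_smul_comm, smul_mul_assoc,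
    Fi_mul_Es_mul_Fi_mul_Es hFidem hθs hFE0 hEF0 hFEF hFE hEF hi hj hs, smul_ite, smul_zero,
    smul_smul, ← mul_assoc]
  congr 1
  by_cases hsd : s < d
  · rw [if_pos hsd,
      Fi_mul_Es_mul_cR_mul_Fi_mul_Es hFidem hθs hFE0 hEF0 hFEF hFAF1 hFE hEF hi hj hsd]
  · rw [if_neg hsd, if_neg fun h => hsd (mem_filter.mp h).2.2, mul_zero, zero_mul]

end SplitDecomposition

open SplitDecomposition in
theorem stmt10_general {F V : Type*} [Field F] [AddCommGroup V] [Module F V]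
    (d : ℕ)
    (A : Module.End F V) (Es Fi : ℕ → Module.End F V) (θ θs : ℕ → F)
    (cR cL : Module.End F V)
    (hFF : ∀ i ≤ d, ∀ j ≤ d, Fi i * Fi j = if i = j then Fi i else 0)
    (hFsum : ∑ i ∈ Finset.range (d + 1), Fi i = 1)
    (hθsdist : ∀ i ≤ d, ∀ j ≤ d, i ≠ j → θs i ≠ θs j)
    (hFE0 : ∀ i j, i < j → j ≤ d → Fi j * Es i = 0)
    (hEF0 : ∀ i j, i < j → j ≤ d → Es j * Fi i = 0)
    (hFEF : ∀ i ≤ d, Fi i * Es i * Fi i = Fi i)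
    (hblockA : ∀ i ≤ d, ∀ j ≤ d, i ≠ j → i ≠ j + 1 → Fi i * A * Fi j = 0)
    (hFAF1 : ∀ s < d, Fi (s + 1) * A * Fi s = cR * Fi s)
    (hFAF0 : ∀ s ≤ d, Fi s * A * Fi s = θ s • Fi s)
    (hFE : ∀ i j, i ≤ j → j ≤ d →
      Fi i * Es j =
        (∏ k ∈ Finset.Ico i j, (θs j - θs k))⁻¹ • (cL ^ (j - i) * (Fi j * Es j)))
    (hEF : ∀ i j, i ≤ j → j ≤ d →
      Es i * Fi j =
        (∏ k ∈ Finset.Ioc i j, (θs i - θs k))⁻¹ • (Es i * Fi i * cL ^ (j - i))) :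
    ∀ i ≤ d, ∀ j ≤ d,
      Fi i * Es i * A * Es j =
        (∑ s ∈ Finset.Icc i j,
          (θ s * (∏ k ∈ Finset.Ioc i s, (θs i - θs k))⁻¹ *
            (∏ k ∈ Finset.Ico s j, (θs j - θs k))⁻¹) •
              (cL ^ (s - i) * cL ^ (j - s) * (Fi j * Es j)))
        + ∑ s ∈ (Finset.range (j + 1)).filter (fun s => i ≤ s + 1 ∧ s + 1 ≤ d),
            ((∏ k ∈ Finset.Ioc i (s + 1), (θs i - θs k))⁻¹ *
              (∏ k ∈ Finset.Ico s j, (θs j - θs k))⁻¹) •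
                (cL ^ (s + 1 - i) * cR * cL ^ (j - s) * (Fi j * Es j)) := by
  intro i hi j hj
  have hFidem : ∀ i ≤ d, IsIdempotentElem (Fi i) := fun i hi => (hFF i hi i hi).trans (if_pos rfl)
  have hθs : Set.InjOn θs (Set.Iic d) := fun a ha b hb hab =>
    by_contra fun hne => hθsdist a ha b hb hne hab
  have hIcc : Icc i j ⊆ range (d + 1) := fun s hs =>
    mem_range.mpr (Nat.lt_succ_of_le ((mem_Icc.mp hs).2.trans hj))
  have hfilter : (range (j + 1)).filter (fun s => i ≤ s + 1 ∧ s + 1 ≤ d) ⊆ range (d + 1) :=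
    fun s hs => by rw [mem_filter, mem_range] at hs; rw [mem_range]; omega
  have hexpand : Fi i * Es i * A * Es j = ∑ s ∈ range (d + 1), Fi i * Es i * (A * Fi s) * Es j := by
    rw [← sum_mul, ← mul_sum, ← mul_sum, hFsum, mul_one]
  rw [hexpand, sum_congr rfl fun s hs => Fi_mul_Es_mul_mul_Fi_mul_Es hFidem hFsum hθs hFE0 hEF0
    hFEF hblockA hFAF1 hFAF0 hFE hEF hi hj (Nat.lt_succ_iff.mp (mem_range.mp hs)),
    sum_add_distrib, sum_ite_mem, sum_ite_mem, inter_eq_right.mpr hIcc, inter_eq_right.mpr hfilter]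

/-- General expansion formula for `F_i E*_i A E*_j` in terms of the
split raising/lowering maps `𝓡, 𝓛` (Theorem 8.5 of the paper). -/
theorem stmt10 {F V : Type*} [Field F] [AddCommGroup V] [Module F V]
    [FiniteDimensional F V] (d : ℕ) (hd : 1 ≤ d)
    (A As : Module.End F V) (Es Fi : ℕ → Module.End F V) (θ θs : ℕ → F)
    (cR cL : Module.End F V)
    (hEsEs : ∀ i ≤ d, ∀ j ≤ d, Es i * Es j = if i = j then Es i else 0)
    (hFF : ∀ i ≤ d, ∀ j ≤ d, Fi i * Fi j = if i = j then Fi i else 0)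
    (hEssum : ∑ i ∈ Finset.range (d + 1), Es i = 1)
    (hFsum : ∑ i ∈ Finset.range (d + 1), Fi i = 1)
    (hθsdist : ∀ i ≤ d, ∀ j ≤ d, i ≠ j → θs i ≠ θs j)
    (hFE0 : ∀ i j, i < j → j ≤ d → Fi j * Es i = 0)
    (hEF0 : ∀ i j, i < j → j ≤ d → Es j * Fi i = 0)
    (hFEF : ∀ i ≤ d, Fi i * Es i * Fi i = Fi i)
    (hcR : cR = A - ∑ i ∈ Finset.range (d + 1), θ i • Fi i)
    (hcL : cL = As - ∑ i ∈ Finset.range (d + 1), θs i • Fi i)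
    (hblockA : ∀ i ≤ d, ∀ j ≤ d, i ≠ j → i ≠ j + 1 → Fi i * A * Fi j = 0)
    (hFAF1 : ∀ s < d, Fi (s + 1) * A * Fi s = cR * Fi s)
    (hFAF0 : ∀ s ≤ d, Fi s * A * Fi s = θ s • Fi s)
    (hFE : ∀ i j, i ≤ j → j ≤ d →
      Fi i * Es j =
        (∏ k ∈ Finset.Ico i j, (θs j - θs k))⁻¹ • (cL ^ (j - i) * (Fi j * Es j)))
    (hEF : ∀ i j, i ≤ j → j ≤ d →
      Es i * Fi j =
        (∏ k ∈ Finset.Ioc i j, (θs i - θs k))⁻¹ • (Es i * Fi i * cL ^ (j - i))) :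
    ∀ i ≤ d, ∀ j ≤ d,
      Fi i * Es i * A * Es j =
        (∑ s ∈ Finset.Icc i j,
          (θ s * (∏ k ∈ Finset.Ioc i s, (θs i - θs k))⁻¹ *
            (∏ k ∈ Finset.Ico s j, (θs j - θs k))⁻¹) •
              (cL ^ (s - i) * cL ^ (j - s) * (Fi j * Es j)))
        + ∑ s ∈ (Finset.range (j + 1)).filter (fun s => i ≤ s + 1 ∧ s + 1 ≤ d),
            ((∏ k ∈ Finset.Ioc i (s + 1), (θs i - θs k))⁻¹ *
              (∏ k ∈ Finset.Ico s j, (θs j - θs k))⁻¹) •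
                (cL ^ (s + 1 - i) * cR * cL ^ (j - s) * (Fi j * Es j)) :=
  stmt10_general d A Es Fi θ θs cR cL hFF hFsum hθsdist hFE0 hEF0 hFEF hblockA hFAF1 hFAF0 hFE hEF
end

section
/- For 0 \le i, j \le d with j - i \ge 2, the following operator vanishes on F_jV: \sum_{i\le s\le j} \theta_s \mathcal{L}^{s-i}/\prod_{k=i+1}^s(\theta^*_i-\theta^*_k) \cdot \mathcal{L}^{j-s}/\prod_{k=s}^{j-1}(\theta^*_j-\theta^*_k) + \sum_{(r,s): i\le r\le d, 0\le s\le j, r-s=1} \mathcal{L}^{r-i}/\prod_{k=i+1}^r(\theta^*_i-\theta^*_k) \cdot \mathcal{R} \cdot \mathcal{L}^{j-s}/\prod_{k=s}^{j-1}(\theta^*_j-\theta^*_k). -/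
/-!
Multiply the expansion formula for `F_i E*_i A E*_j` on the right by `F_j`. The left side
vanishes because `E*_i A E*_j = 0` for `j - i ≥ 2`, while on the right every term ends in
`F_j E*_j F_j = F_j`, leaving the operator in question applied to `F_j`.
-/

theorem mul_eq_zero_of_mul_mul_eq_zero {R : Type*} [SemigroupWithZero R] {x f e : R}
    (hfef : f * e * f = f) (h : x * (f * e) * f = 0) : x * f = 0 :=
  calc x * f = x * (f * e) * f := by rw [mul_assoc x, hfef]
    _ = 0 := h

theorem stmt11_general {F V : Type*} [Field F] [AddCommGroup V] [Module F V]
    (d : ℕ)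
    (A : Module.End F V) (Es Fi : ℕ → Module.End F V) (θ θs : ℕ → F)
    (cR cL : Module.End F V)
    (hEAE : ∀ i ≤ d, ∀ j ≤ d, (i + 2 ≤ j ∨ j + 2 ≤ i) → Es i * A * Es j = 0)
    (hFEF : ∀ i ≤ d, Fi i * Es i * Fi i = Fi i)
    (hcomp : ∀ i ≤ d, ∀ j ≤ d,
      Fi i * Es i * A * Es j =
        (∑ s ∈ Finset.Icc i j,
          (θ s * (∏ k ∈ Finset.Ioc i s, (θs i - θs k))⁻¹ *
            (∏ k ∈ Finset.Ico s j, (θs j - θs k))⁻¹) •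
              (cL ^ (s - i) * cL ^ (j - s) * (Fi j * Es j)))
        + ∑ s ∈ (Finset.range (j + 1)).filter (fun s => i ≤ s + 1 ∧ s + 1 ≤ d),
            ((∏ k ∈ Finset.Ioc i (s + 1), (θs i - θs k))⁻¹ *
              (∏ k ∈ Finset.Ico s j, (θs j - θs k))⁻¹) •
                (cL ^ (s + 1 - i) * cR * cL ^ (j - s) * (Fi j * Es j))) :
    ∀ i j, i ≤ d → j ≤ d → i + 2 ≤ j →
      ((∑ s ∈ Finset.Icc i j,
          (θ s * (∏ k ∈ Finset.Ioc i s, (θs i - θs k))⁻¹ *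
            (∏ k ∈ Finset.Ico s j, (θs j - θs k))⁻¹) •
              (cL ^ (s - i) * cL ^ (j - s)))
        + ∑ s ∈ (Finset.range (j + 1)).filter (fun s => i ≤ s + 1 ∧ s + 1 ≤ d),
            ((∏ k ∈ Finset.Ioc i (s + 1), (θs i - θs k))⁻¹ *
              (∏ k ∈ Finset.Ico s j, (θs j - θs k))⁻¹) •
                (cL ^ (s + 1 - i) * cR * cL ^ (j - s))) * Fi j = 0 := by
  intro i j hi hj hij
  apply mul_eq_zero_of_mul_mul_eq_zero (hFEF j hj)
  have hflat : Fi i * Es i * A * Es j * Fi j = 0 := by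
    rw [mul_assoc (Fi i), mul_assoc (Fi i), hEAE i hi j hj (Or.inl hij), mul_zero, zero_mul]
  rw [hcomp i hi j hj] at hflat
  simpa only [add_mul, Finset.sum_mul, smul_mul_assoc] using hflat

/-- For `j - i ≥ 2`, the operator combination of `𝓡, 𝓛` from the
expansion formula vanishes on `F_jV` (Theorem 9.1 of the paper). -/
theorem stmt11 {F V : Type*} [Field F] [AddCommGroup V] [Module F V]
    [FiniteDimensional F V] (d : ℕ) (hd : 1 ≤ d)
    (A As : Module.End F V) (Es Fi : ℕ → Module.End F V) (θ θs : ℕ → F)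
    (cR cL : Module.End F V)
    (hEsEs : ∀ i ≤ d, ∀ j ≤ d, Es i * Es j = if i = j then Es i else 0)
    (hFF : ∀ i ≤ d, ∀ j ≤ d, Fi i * Fi j = if i = j then Fi i else 0)
    (hEssum : ∑ i ∈ Finset.range (d + 1), Es i = 1)
    (hFsum : ∑ i ∈ Finset.range (d + 1), Fi i = 1)
    (hθsdist : ∀ i ≤ d, ∀ j ≤ d, i ≠ j → θs i ≠ θs j)
    (hcR : cR = A - ∑ i ∈ Finset.range (d + 1), θ i • Fi i)
    (hcL : cL = As - ∑ i ∈ Finset.range (d + 1), θs i • Fi i)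
    (hEAE : ∀ i ≤ d, ∀ j ≤ d, (i + 2 ≤ j ∨ j + 2 ≤ i) → Es i * A * Es j = 0)
    (hFEF : ∀ i ≤ d, Fi i * Es i * Fi i = Fi i)
    (hcomp : ∀ i ≤ d, ∀ j ≤ d,
      Fi i * Es i * A * Es j =
        (∑ s ∈ Finset.Icc i j,
          (θ s * (∏ k ∈ Finset.Ioc i s, (θs i - θs k))⁻¹ *
            (∏ k ∈ Finset.Ico s j, (θs j - θs k))⁻¹) •
              (cL ^ (s - i) * cL ^ (j - s) * (Fi j * Es j)))
        + ∑ s ∈ (Finset.range (j + 1)).filter (fun s => i ≤ s + 1 ∧ s + 1 ≤ d),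
            ((∏ k ∈ Finset.Ioc i (s + 1), (θs i - θs k))⁻¹ *
              (∏ k ∈ Finset.Ico s j, (θs j - θs k))⁻¹) •
                (cL ^ (s + 1 - i) * cR * cL ^ (j - s) * (Fi j * Es j))) :
    ∀ i j, i ≤ d → j ≤ d → i + 2 ≤ j →
      ((∑ s ∈ Finset.Icc i j,
          (θ s * (∏ k ∈ Finset.Ioc i s, (θs i - θs k))⁻¹ *
            (∏ k ∈ Finset.Ico s j, (θs j - θs k))⁻¹) •
              (cL ^ (s - i) * cL ^ (j - s)))
        + ∑ s ∈ (Finset.range (j + 1)).filter (fun s => i ≤ s + 1 ∧ s + 1 ≤ d),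
            ((∏ k ∈ Finset.Ioc i (s + 1), (θs i - θs k))⁻¹ *
              (∏ k ∈ Finset.Ico s j, (θs j - θs k))⁻¹) •
                (cL ^ (s + 1 - i) * cR * cL ^ (j - s))) * Fi j = 0 :=
  stmt11_general d A Es Fi θ θs cR cL hEAE hFEF hcomp
end

section
/- For 0 \le i \le j \le d, rank(E^*_i A^{j-i} E^*_j) = rank(E^*_j A^{j-i} E^*_i) = min(\rho_i, \rho_j), where \rho_k = dim E^*_kV; this minimum equals \rho_i if i+j \le d and \rho_j if i+j \ge d. -/
/-- A tridiagonal system `(A; {E_i}; A*; {E*_i})` of diameter `d` on `V`: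
`A, A*` are diagonalizable with primitive idempotents `E_i`, `E*_i` (in standard
orderings, so that the tridiagonal conditions hold), mutually distinct eigenvalues
`θ_i`, `θ*_i`, and no nontrivial proper subspace of `V` is invariant under both. -/
structure TDSystem (F V : Type*) [Field F] [AddCommGroup V] [Module F V] (d : ℕ) where
  A : Module.End F V
  As : Module.End F V
  E : ℕ → Module.End F V
  Es : ℕ → Module.End F V
  θ : ℕ → F
  θs : ℕ → F
  hEE : ∀ i ≤ d, ∀ j ≤ d, E i * E j = if i = j then E i else 0
  hEsEs : ∀ i ≤ d, ∀ j ≤ d, Es i * Es j = if i = j then Es i else 0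
  hEsum : ∑ i ∈ Finset.range (d + 1), E i = 1
  hEssum : ∑ i ∈ Finset.range (d + 1), Es i = 1
  hEne : ∀ i ≤ d, E i ≠ 0
  hEsne : ∀ i ≤ d, Es i ≠ 0
  hA : A = ∑ i ∈ Finset.range (d + 1), θ i • E i
  hAs : As = ∑ i ∈ Finset.range (d + 1), θs i • Es i
  hθ : ∀ i ≤ d, ∀ j ≤ d, i ≠ j → θ i ≠ θ j
  hθs : ∀ i ≤ d, ∀ j ≤ d, i ≠ j → θs i ≠ θs j
  htri : ∀ i ≤ d, ∀ j ≤ d, (i + 1 < j ∨ j + 1 < i) → Es i * A * Es j = 0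
  htris : ∀ i ≤ d, ∀ j ≤ d, (i + 1 < j ∨ j + 1 < i) → E i * As * E j = 0
  hirr : ∀ W : Submodule F V, (∀ v ∈ W, A v ∈ W) → (∀ v ∈ W, As v ∈ W) → W = ⊥ ∨ W = ⊤

/-! The argument runs through the split decomposition
`U_i = (E*_0V + ⋯ + E*_iV) ∩ (E_iV + ⋯ + E_dV)`. Irreducibility forces
`(E*_0V + ⋯ + E*_{k-1}V) + (E_kV + ⋯ + E_dV) = V`, and the same statement for `(A*; A)` turns
this, by a dimension count, into a direct sum. Hence `E*_i` maps `U_i` onto `E*_iV` with trivial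
kernel, and `E*_j A^{j-i} E*_i` has the kernel of `E*_i` as soon as `E*_j A^{j-i}` is injective
on `U_i`. For `i + j ≤ d` this injectivity comes from pushing `u ∈ U_i` along
`A - θ_i, A - θ_{i+1}, …` through `U_{i+1}, U_{i+2}, …` and using that the `θ_k` are distinct.
Transposition handles `E*_i A^{j-i} E*_j`, reversing the order of the `E*_k` handles `i + j ≥ d`,
and since both ranks are at most `min(ρ_i, ρ_j)` the minimum is the one attained. -/

open Module LinearMap Finset

namespace LinearMap

theorem finrank_range_eq_of_ker_eq {K V W₁ W₂ : Type*} [DivisionRing K] [AddCommGroup V]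
    [Module K V] [FiniteDimensional K V] [AddCommGroup W₁] [Module K W₁] [AddCommGroup W₂]
    [Module K W₂] {f : V →ₗ[K] W₁} {g : V →ₗ[K] W₂} (h : ker f = ker g) :
    finrank K (range f) = finrank K (range g) := by
  have hf := f.finrank_range_add_finrank_ker
  have hg := g.finrank_range_add_finrank_ker
  rw [h] at hf
  omega

theorem finrank_range_mul_mul_le {K V : Type*} [DivisionRing K] [AddCommGroup V]
    [Module K V] [FiniteDimensional K V] (f g h : Module.End K V) :
    finrank K (range (f * g * h)) ≤ min (finrank K (range f)) (finrank K (range h)) := by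
  refine le_min (Submodule.finrank_mono ?_) ?_
  · rw [mul_assoc]
    exact range_comp_le_range (g * h) f
  · rw [Module.End.mul_eq_comp, range_comp]
    exact Submodule.finrank_map_le _ _

variable {F V : Type*} [Field F] [AddCommGroup V] [Module F V]

theorem dualMap_ne_zero {f : Module.End F V} (hf : f ≠ 0) : f.dualMap ≠ 0 := by
  obtain ⟨v, hv⟩ : ∃ v, f v ≠ 0 := not_forall.1 fun h => hf (LinearMap.ext h)
  obtain ⟨φ, hφ⟩ : ∃ φ : Dual F V, φ (f v) ≠ 0 :=
    not_forall.1 fun h => hv ((forall_dual_apply_eq_zero_iff F _).1 h)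
  exact fun h => hφ (by simpa using congrArg (fun g => g φ v) h)

theorem dualMap_mul_dualMap_eq_ite {f : ℕ → Module.End F V} {i j : ℕ}
    (h : f j * f i = if j = i then f j else 0) :
    (f i).dualMap * (f j).dualMap = if i = j then (f i).dualMap else 0 := by
  change (f j * f i).dualMap = _
  rw [h]
  by_cases hij : i = j
  · subst hij; simp
  · simp [hij, Ne.symm hij, dualMap_def]

theorem dualMap_sum {ι : Type*} {s : Finset ι} (f : ι → Module.End F V) :
    (∑ i ∈ s, f i).dualMap = ∑ i ∈ s, (f i).dualMap :=
  map_sum Dual.transpose f s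

theorem dualMap_pow (f : Module.End F V) (n : ℕ) : (f ^ n).dualMap = f.dualMap ^ n := by
  induction n with
  | zero => rfl
  | succ n ih => rw [pow_succ, pow_succ', ← ih]; rfl

end LinearMap

namespace Module.End

variable {F V : Type*} [Field F] [AddCommGroup V] [Module F V]

/-- For a complete family of orthogonal idempotents `f 0, …, f d` this is the sum of the `f m V`
with `m ≤ d` and `¬ p m`. -/
def commonKer (f : ℕ → Module.End F V) (d : ℕ) (p : ℕ → Prop) : Submodule F V :=
  ⨅ (m) (_ : m ≤ d) (_ : p m), ker (f m)

variable {f : ℕ → Module.End F V} {d : ℕ} {p q : ℕ → Prop}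

theorem mem_commonKer {v : V} : v ∈ commonKer f d p ↔ ∀ m ≤ d, p m → f m v = 0 := by
  simp [commonKer, Submodule.mem_iInf]

theorem commonKer_le_commonKer (h : ∀ m ≤ d, q m → p m) : commonKer f d p ≤ commonKer f d q :=
  fun _ hv => mem_commonKer.2 fun m hm hq => mem_commonKer.1 hv m hm (h m hm hq)

theorem sum_apply_eq_self (hsum : ∑ i ∈ range (d + 1), f i = 1) (v : V) :
    ∑ i ∈ range (d + 1), f i v = v := by
  simpa [LinearMap.sum_apply] using congrArg (· v) hsum

section Orthogonal

variable (horth : ∀ i ≤ d, ∀ j ≤ d, f i * f j = if i = j then f i else 0)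
include horth

theorem apply_apply_eq_zero_of_ne {i j : ℕ} (hi : i ≤ d) (hj : j ≤ d) (hij : i ≠ j) (v : V) :
    f i (f j v) = 0 := by
  simpa [hij] using congrArg (· v) (horth i hi j hj)

theorem sum_mem_commonKer {s : Finset ℕ} (hs : ∀ m ∈ s, m ≤ d ∧ ¬ p m) (v : V) :
    ∑ m ∈ s, f m v ∈ commonKer f d p := by
  refine mem_commonKer.2 fun m' hm' hp => ?_
  rw [map_sum]
  refine sum_eq_zero fun m hm => apply_apply_eq_zero_of_ne horth hm' (hs m hm).1 ?_ v
  rintro rfl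
  exact (hs m' hm).2 hp

theorem range_le_commonKer {i : ℕ} (hi : i ≤ d) (hp : ¬ p i) : range (f i) ≤ commonKer f d p := by
  rintro _ ⟨v, rfl⟩
  simpa using sum_mem_commonKer horth (s := {i}) (by simpa using ⟨hi, hp⟩) v

theorem isCompl_commonKer (hsum : ∑ i ∈ range (d + 1), f i = 1) (hpq : ∀ m, q m ↔ ¬ p m) :
    IsCompl (commonKer f d p) (commonKer f d q) := by
  classical
  constructor
  · refine Submodule.disjoint_def.2 fun v hp hq => ?_
    rw [← sum_apply_eq_self hsum v]
    refine sum_eq_zero fun m hm => ?_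
    by_cases h : p m
    · exact mem_commonKer.1 hp m (Nat.lt_succ_iff.1 (mem_range.1 hm)) h
    · exact mem_commonKer.1 hq m (Nat.lt_succ_iff.1 (mem_range.1 hm)) ((hpq m).2 h)
  · refine codisjoint_iff_le_sup.2 fun v _ => Submodule.mem_sup.2 ?_
    refine ⟨_, sum_mem_commonKer horth ?_ v, _, sum_mem_commonKer horth ?_ v,
      (sum_filter_add_sum_filter_not _ q _).trans (sum_apply_eq_self hsum v)⟩
    · simp only [mem_filter, mem_range]
      exact fun m hm => ⟨by omega, (hpq m).1 hm.2⟩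
    · simp only [mem_filter, mem_range]
      exact fun m hm => ⟨by omega, hm.2⟩

theorem mul_sub_smul_one_of_eq_sum {A : Module.End F V} {θ : ℕ → F}
    (hA : A = ∑ i ∈ range (d + 1), θ i • f i) {k : ℕ} (hk : k ≤ d) (c : F) :
    f k * (A - c • 1) = (θ k - c) • f k := by
  have hkA : f k * A = θ k • f k := by
    rw [hA, mul_sum, sum_eq_single k]
    · rw [mul_smul_comm, horth k hk k hk, if_pos rfl]
    · intro i hi hik
      rw [mul_smul_comm, horth k hk i (Nat.lt_succ_iff.1 (mem_range.1 hi)), if_neg (Ne.symm hik),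
        smul_zero]
    · exact fun hk' => absurd (mem_range.2 (Nat.lt_succ_of_le hk)) hk'
  rw [mul_sub, hkA, mul_smul_comm, mul_one, sub_smul]

end Orthogonal

theorem apply_mem_commonKer (hsum : ∑ i ∈ range (d + 1), f i = 1) {B : Module.End F V}
    (hB : ∀ m ≤ d, ∀ h ≤ d, q m → ¬ p h → f m * B * f h = 0) {v : V}
    (hv : v ∈ commonKer f d p) : B v ∈ commonKer f d q := by
  refine mem_commonKer.2 fun m hm hq => ?_
  rw [← sum_apply_eq_self hsum v, map_sum, map_sum]
  refine sum_eq_zero fun h hh => ?_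
  have hhd : h ≤ d := Nat.lt_succ_iff.1 (mem_range.1 hh)
  by_cases hp : p h
  · rw [mem_commonKer.1 hv h hhd hp, map_zero, map_zero]
  · exact congrArg (· v) (hB m hm h hhd hq hp)

end Module.End

namespace TDSystem

open Module.End

variable {F V : Type*} [Field F] [AddCommGroup V] [Module F V] {d : ℕ}

def swap (Φ : TDSystem F V d) : TDSystem F V d where
  A := Φ.As
  As := Φ.A
  E := Φ.Es
  Es := Φ.E
  θ := Φ.θs
  θs := Φ.θ
  hEE := Φ.hEsEs
  hEsEs := Φ.hEE
  hEsum := Φ.hEssum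
  hEssum := Φ.hEsum
  hEne := Φ.hEsne
  hEsne := Φ.hEne
  hA := Φ.hAs
  hAs := Φ.hA
  hθ := Φ.hθs
  hθs := Φ.hθ
  htri := Φ.htris
  htris := Φ.htri
  hirr := fun W hA hAs => Φ.hirr W hAs hA

def revEs (Φ : TDSystem F V d) : TDSystem F V d where
  A := Φ.A
  As := Φ.As
  E := Φ.E
  Es i := Φ.Es (d - i)
  θ := Φ.θ
  θs i := Φ.θs (d - i)
  hEE := Φ.hEE
  hEsEs i hi j hj := by
    rw [Φ.hEsEs (d - i) (by omega) (d - j) (by omega)]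
    exact if_congr (by omega) rfl rfl
  hEsum := Φ.hEsum
  hEssum := by simpa using (sum_range_reflect Φ.Es (d + 1)).trans Φ.hEssum
  hEne := Φ.hEne
  hEsne i hi := Φ.hEsne (d - i) (by omega)
  hA := Φ.hA
  hAs := by simpa using Φ.hAs.trans (sum_range_reflect (fun i => Φ.θs i • Φ.Es i) (d + 1)).symm
  hθ := Φ.hθ
  hθs i hi j hj hij := Φ.hθs (d - i) (by omega) (d - j) (by omega) (by omega)
  htri i hi j hj hij := Φ.htri (d - i) (by omega) (d - j) (by omega) (by omega)
  htris := Φ.htris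
  hirr := Φ.hirr

/-- The system `(A; {E_{d-i}}; A*; {E*_i})`. -/
def revE (Φ : TDSystem F V d) : TDSystem F V d := Φ.swap.revEs.swap

variable (Φ : TDSystem F V d)

theorem revEs_Es_sub {k : ℕ} (hk : k ≤ d) : Φ.revEs.Es (d - k) = Φ.Es k := by
  simp only [revEs, Nat.sub_sub_self hk]

/-- `E*_0V + ⋯ + E*_{k-1}V`. -/
def lower (k : ℕ) : Submodule F V := commonKer Φ.Es d (k ≤ ·)

/-- `E_kV + ⋯ + E_dV`. -/
def upper (k : ℕ) : Submodule F V := commonKer Φ.E d (· < k)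

/-- The split decomposition `U_i = (E*_0V + ⋯ + E*_iV) ∩ (E_iV + ⋯ + E_dV)`. -/
def split (i : ℕ) : Submodule F V := Φ.lower (i + 1) ⊓ Φ.upper i

theorem lower_mono {k l : ℕ} (h : k ≤ l) : Φ.lower k ≤ Φ.lower l :=
  commonKer_le_commonKer fun _ _ hm => h.trans hm

theorem upper_anti {k l : ℕ} (h : k ≤ l) : Φ.upper l ≤ Φ.upper k :=
  commonKer_le_commonKer fun _ _ hm => hm.trans_le h

theorem upper_zero : Φ.upper 0 = ⊤ :=
  eq_top_iff.2 fun _ _ => mem_commonKer.2 fun _ _ hm => absurd hm (Nat.not_lt_zero _)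

theorem range_Es_le_lower {i : ℕ} (hi : i ≤ d) : range (Φ.Es i) ≤ Φ.lower (i + 1) :=
  range_le_commonKer Φ.hEsEs hi (by omega)

theorem A_mem_lower {k : ℕ} {v : V} (hv : v ∈ Φ.lower k) : Φ.A v ∈ Φ.lower (k + 1) :=
  apply_mem_commonKer Φ.hEssum
    (fun m hm h hh hkm hhk => Φ.htri m hm h hh (Or.inr (by omega))) hv

theorem pow_mem_lower {k : ℕ} (m : ℕ) {v : V} (hv : v ∈ Φ.lower k) :
    (Φ.A ^ m) v ∈ Φ.lower (k + m) := by
  induction m with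
  | zero => simpa using hv
  | succ m ih => simpa only [pow_succ', Module.End.mul_apply, ← add_assoc] using Φ.A_mem_lower ih

theorem As_sub_mem_lower {i : ℕ} {v : V} (hv : v ∈ Φ.lower (i + 1)) :
    Φ.As v - Φ.θs i • v ∈ Φ.lower i := by
  refine apply_mem_commonKer (B := Φ.As - Φ.θs i • 1) Φ.hEssum (fun m hm h hh him hhi => ?_) hv
  rw [mul_sub_smul_one_of_eq_sum Φ.hEsEs Φ.hAs hm, smul_mul_assoc, Φ.hEsEs m hm h hh]
  split_ifs with hmh
  · rw [show m = i by omega, sub_self, zero_smul]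
  · rw [smul_zero]

theorem A_sub_mem_upper {i : ℕ} {v : V} (hv : v ∈ Φ.upper i) :
    Φ.A v - Φ.θ i • v ∈ Φ.upper (i + 1) := by
  refine apply_mem_commonKer (B := Φ.A - Φ.θ i • 1) Φ.hEsum (fun m hm h hh hmi hih => ?_) hv
  rw [mul_sub_smul_one_of_eq_sum Φ.hEE Φ.hA hm, smul_mul_assoc, Φ.hEE m hm h hh]
  split_ifs with hmh
  · rw [show m = i by omega, sub_self, zero_smul]
  · rw [smul_zero]

theorem As_mem_upper {i : ℕ} {v : V} (hv : v ∈ Φ.upper i) : Φ.As v ∈ Φ.upper (i - 1) :=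
  apply_mem_commonKer Φ.hEsum
    (fun m hm h hh hmi hhi => Φ.htris m hm h hh (Or.inl (by omega))) hv

theorem A_sub_mem_split {i : ℕ} {v : V} (hv : v ∈ Φ.split i) :
    Φ.A v - Φ.θ i • v ∈ Φ.split (i + 1) :=
  ⟨sub_mem (Φ.A_mem_lower hv.1) (Submodule.smul_mem _ _ (Φ.lower_mono (by omega) hv.1)),
    Φ.A_sub_mem_upper hv.2⟩

theorem As_sub_mem_split {i : ℕ} {v : V} (hv : v ∈ Φ.split i) :
    Φ.As v - Φ.θs i • v ∈ Φ.split (i - 1) :=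
  ⟨Φ.lower_mono (by omega) (Φ.As_sub_mem_lower hv.1),
    sub_mem (Φ.As_mem_upper hv.2) (Submodule.smul_mem _ _ (Φ.upper_anti (by omega) hv.2))⟩

/-- `⨆ i, U_i` contains `E*_0V ≠ 0` and is invariant under `A` and `A*`, so it is `V`. -/
theorem iSup_split_eq_top : ⨆ i, Φ.split i = ⊤ := by
  have hinv : ∀ (B : Module.End F V) (c : ℕ → F) (s : ℕ → ℕ),
      (∀ i, ∀ v ∈ Φ.split i, B v - c i • v ∈ Φ.split (s i)) →
        ∀ v ∈ ⨆ i, Φ.split i, B v ∈ ⨆ i, Φ.split i := by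
    intro B c s hB v hv
    refine (iSup_le fun i u hu => ?_ : ⨆ i, Φ.split i ≤ (⨆ i, Φ.split i).comap B) hv
    rw [Submodule.mem_comap, ← sub_add_cancel (B u) (c i • u)]
    exact add_mem (Submodule.mem_iSup_of_mem _ (hB i u hu))
      (Submodule.smul_mem _ _ (Submodule.mem_iSup_of_mem _ hu))
  refine (Φ.hirr _ (hinv _ _ _ fun _ _ => Φ.A_sub_mem_split)
    (hinv _ _ _ fun _ _ => Φ.As_sub_mem_split)).resolve_left fun hbot => ?_
  refine Φ.hEsne 0 (Nat.zero_le d) (range_eq_bot.1 (eq_bot_iff.2 (hbot ▸ ?_)))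
  exact (le_inf (Φ.range_Es_le_lower (Nat.zero_le d)) (Φ.upper_zero ▸ le_top)).trans
    (le_iSup Φ.split 0)

theorem lower_sup_upper (k : ℕ) : Φ.lower k ⊔ Φ.upper k = ⊤ := by
  refine eq_top_iff.2 (Φ.iSup_split_eq_top ▸ iSup_le fun i => ?_)
  rcases lt_or_ge i k with hik | hki
  · exact inf_le_left.trans ((Φ.lower_mono hik).trans le_sup_left)
  · exact inf_le_right.trans ((Φ.upper_anti hki).trans le_sup_right)

theorem Es_apply_Es {i : ℕ} (hi : i ≤ d) (v : V) : Φ.Es i (Φ.Es i v) = Φ.Es i v := by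
  simpa using congrArg (· v) (Φ.hEsEs i hi i hi)

theorem sub_Es_mem_lower {i : ℕ} (hi : i ≤ d) {u : V} (hu : u ∈ Φ.lower (i + 1)) :
    u - Φ.Es i u ∈ Φ.lower i := by
  refine mem_commonKer.2 fun m hm him => ?_
  rcases him.eq_or_lt with rfl | him
  · rw [map_sub, Φ.Es_apply_Es hm, sub_self]
  · rw [map_sub, mem_commonKer.1 hu m hm him, apply_apply_eq_zero_of_ne Φ.hEsEs hm hi him.ne',
      sub_zero]

/-- The components of `u` other than `E*_iu` are carried by `A^m` into
`E*_0V + ⋯ + E*_{j-1}V`. -/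
theorem Es_pow_apply_Es {i j m : ℕ} (hij : i + m ≤ j) (hj : j ≤ d) {u : V}
    (hu : u ∈ Φ.lower (i + 1)) : Φ.Es j ((Φ.A ^ m) (Φ.Es i u)) = Φ.Es j ((Φ.A ^ m) u) := by
  have h := mem_commonKer.1 (Φ.pow_mem_lower m (Φ.sub_Es_mem_lower (by omega) hu)) j hj hij
  rwa [map_sub, map_sub, sub_eq_zero, eq_comm] at h

theorem exists_mem_split_Es_apply_eq {i : ℕ} (hi : i ≤ d) {w : V} (hw : w ∈ range (Φ.Es i)) :
    ∃ u ∈ Φ.split i, Φ.Es i u = w := by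
  obtain ⟨x, hx, u, hu, hxu⟩ :=
    Submodule.mem_sup.1 (Φ.lower_sup_upper i ▸ Submodule.mem_top (x := w))
  have hxi : Φ.Es i x = 0 := mem_commonKer.1 hx i hi le_rfl
  obtain ⟨w, rfl⟩ := hw
  refine ⟨u, ⟨?_, hu⟩, ?_⟩
  · rw [← add_sub_cancel_left x u, hxu]
    exact sub_mem (Φ.range_Es_le_lower hi ⟨w, rfl⟩) (Φ.lower_mono (Nat.le_succ i) hx)
  · rw [← add_sub_cancel_left x u, hxu, map_sub, hxi, sub_zero, Φ.Es_apply_Es hi]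

variable [FiniteDimensional F V]

/-- Both `Φ` and `Φ.swap` satisfy `lower_sup_upper`; since `lower k` and `upper k` are
complementary to `Φ.swap.upper k` and `Φ.swap.lower k`, a dimension count forces both sums
to be direct. -/
theorem isCompl_lower_upper (k : ℕ) : IsCompl (Φ.lower k) (Φ.upper k) := by
  have h₁ := Submodule.finrank_sup_add_finrank_inf_eq (Φ.lower k) (Φ.upper k)
  have h₂ := Submodule.finrank_sup_add_finrank_inf_eq (Φ.swap.lower k) (Φ.swap.upper k)
  have h₃ : finrank F (Φ.lower k) + finrank F (Φ.swap.upper k) = finrank F V :=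
    Submodule.finrank_add_eq_of_isCompl
      (isCompl_commonKer Φ.hEsEs Φ.hEssum fun _ => Nat.not_le.symm)
  have h₄ : finrank F (Φ.upper k) + finrank F (Φ.swap.lower k) = finrank F V :=
    Submodule.finrank_add_eq_of_isCompl
      (isCompl_commonKer Φ.hEE Φ.hEsum fun _ => Nat.not_lt.symm)
  rw [Φ.lower_sup_upper, finrank_top] at h₁
  rw [Φ.swap.lower_sup_upper, finrank_top] at h₂
  have hinf : finrank F ↥(Φ.lower k ⊓ Φ.upper k) = 0 := by omega
  exact ⟨disjoint_iff.2 (Submodule.finrank_eq_zero.1 hinf), codisjoint_iff.2 (Φ.lower_sup_upper k)⟩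

theorem eq_zero_of_mem_split {i : ℕ} {u : V} (hu : u ∈ Φ.split i) (h : Φ.Es i u = 0) :
    u = 0 := by
  have hlow : u ∈ Φ.lower i := mem_commonKer.2 fun m hm him => by
    rcases him.eq_or_lt with rfl | him
    · exact h
    · exact mem_commonKer.1 hu.1 m hm him
  exact (Submodule.disjoint_def.1 (Φ.isCompl_lower_upper i).disjoint) u hlow hu.2

/-- Along `u, (A - θ_i)u, (A - θ_{i+1})(A - θ_i)u, …`, which runs through `U_i, U_{i+1}, …`,
the `E*_{i+m}`-component of `A^m u` is that of the `m`-th term; if it vanishes, that term is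
`0`, and the distinct eigenvalues let us climb back to `E_ku = 0` for `k ≥ i + m`. -/
theorem E_apply_eq_zero_of_Es_pow_apply_eq_zero {i m : ℕ} (hm : i + m ≤ d) {u : V}
    (hu : u ∈ Φ.split i) (h : Φ.Es (i + m) ((Φ.A ^ m) u) = 0) {k : ℕ} (hk : i + m ≤ k)
    (hkd : k ≤ d) : Φ.E k u = 0 := by
  induction m generalizing i u with
  | zero =>
    rw [Φ.eq_zero_of_mem_split hu (by simpa using h), map_zero]
  | succ m ih =>
    have hpow : Φ.Es (i + 1 + m) ((Φ.A ^ m) u) = 0 :=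
      mem_commonKer.1 (Φ.pow_mem_lower m hu.1) _ (by omega) le_rfl
    have hnext := ih (by omega) (Φ.A_sub_mem_split hu) (by
      rw [map_sub, map_smul, ← Module.End.mul_apply, ← pow_succ, map_sub, map_smul, hpow,
        show i + 1 + m = i + (m + 1) by omega, h, smul_zero, sub_zero]) (by omega)
    have hEk : Φ.E k (Φ.A u - Φ.θ i • u) = (Φ.θ k - Φ.θ i) • Φ.E k u := by
      simpa using congrArg (· u) (mul_sub_smul_one_of_eq_sum Φ.hEE Φ.hA hkd (Φ.θ i))
    rw [hEk] at hnext
    exact (smul_eq_zero.1 hnext).resolve_left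
      (sub_ne_zero.2 (Φ.hθ k hkd i (by omega) (by omega)))

/-- `u` lies in `E_0V + ⋯ + E_{j-1}V`, inside `Φ.revE.upper (i + 1) = E_0V + ⋯ + E_{d-i-1}V`,
which meets `Φ.revE.lower (i + 1) = Φ.lower (i + 1)` trivially. -/
theorem eq_zero_of_mem_split_of_Es_pow_apply_eq_zero {i j : ℕ} (hij : i ≤ j) (hd : i + j ≤ d)
    {u : V} (hu : u ∈ Φ.split i) (h : Φ.Es j ((Φ.A ^ (j - i)) u) = 0) : u = 0 := by
  have hE : ∀ k, j ≤ k → k ≤ d → Φ.E k u = 0 := fun k hjk hkd =>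
    Φ.E_apply_eq_zero_of_Es_pow_apply_eq_zero (m := j - i) (by omega) hu
      (by rwa [Nat.add_sub_cancel' hij]) (by omega) hkd
  have hup : u ∈ Φ.revE.upper (i + 1) :=
    mem_commonKer.2 fun m _ hm => hE (d - m) (by omega) (Nat.sub_le d m)
  exact (Submodule.disjoint_def.1 (Φ.revE.isCompl_lower_upper (i + 1)).disjoint) u hu.1 hup

theorem ker_Es_pow_mul_Es {i j : ℕ} (hij : i ≤ j) (hd : i + j ≤ d) :
    ker (Φ.Es j * Φ.A ^ (j - i) * Φ.Es i) = ker (Φ.Es i) := by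
  refine le_antisymm (fun v hv => ?_) (fun v hv => by simp [mem_ker.1 hv])
  obtain ⟨u, hu, hEu⟩ := Φ.exists_mem_split_Es_apply_eq (by omega) (mem_range_self (Φ.Es i) v)
  have hu0 : u = 0 := Φ.eq_zero_of_mem_split_of_Es_pow_apply_eq_zero hij hd hu <| by
    rw [← Φ.Es_pow_apply_Es (by omega) (by omega) hu.1, hEu]
    exact hv
  rw [mem_ker, ← hEu, hu0, map_zero]

theorem finrank_range_raising {i j : ℕ} (hij : i ≤ j) (hd : i + j ≤ d) :
    finrank F (range (Φ.Es j * Φ.A ^ (j - i) * Φ.Es i)) = finrank F (range (Φ.Es i)) :=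
  finrank_range_eq_of_ker_eq (Φ.ker_Es_pow_mul_Es hij hd)

def dual : TDSystem F (Dual F V) d where
  A := Φ.A.dualMap
  As := Φ.As.dualMap
  E i := (Φ.E i).dualMap
  Es i := (Φ.Es i).dualMap
  θ := Φ.θ
  θs := Φ.θs
  hEE i hi j hj := dualMap_mul_dualMap_eq_ite (Φ.hEE j hj i hi)
  hEsEs i hi j hj := dualMap_mul_dualMap_eq_ite (Φ.hEsEs j hj i hi)
  hEsum := by rw [← dualMap_sum, Φ.hEsum]; rfl
  hEssum := by rw [← dualMap_sum, Φ.hEssum]; rfl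
  hEne i hi := dualMap_ne_zero (Φ.hEne i hi)
  hEsne i hi := dualMap_ne_zero (Φ.hEsne i hi)
  hA := by rw [Φ.hA, dualMap_def, map_sum]; simp only [map_smul]; rfl
  hAs := by rw [Φ.hAs, dualMap_def, map_sum]; simp only [map_smul]; rfl
  hθ := Φ.hθ
  hθs := Φ.hθs
  htri i hi j hj hij := by
    change (Φ.Es j * Φ.A * Φ.Es i).dualMap = 0
    rw [Φ.htri j hj i hi hij.symm, dualMap_def, map_zero]
  htris i hi j hj hij := by
    change (Φ.E j * Φ.As * Φ.E i).dualMap = 0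
    rw [Φ.htris j hj i hi hij.symm, dualMap_def, map_zero]
  hirr W hA hAs := by
    have hinv : ∀ B : Module.End F V, (∀ φ ∈ W, B.dualMap φ ∈ W) →
        ∀ v ∈ W.dualCoannihilator, B v ∈ W.dualCoannihilator := fun B hB v hv =>
      (Submodule.mem_dualCoannihilator _).2 fun φ hφ =>
        (Submodule.mem_dualCoannihilator _).1 hv _ (hB φ hφ)
    rw [← Subspace.dualCoannihilator_dualAnnihilator_eq (W := W)]
    rcases Φ.hirr _ (hinv _ hA) (hinv _ hAs) with h | h <;> rw [h]
    · exact Or.inr Submodule.dualAnnihilator_bot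
    · exact Or.inl Submodule.dualAnnihilator_top

theorem finrank_range_lowering {i j : ℕ} (hij : i ≤ j) (hd : i + j ≤ d) :
    finrank F (range (Φ.Es i * Φ.A ^ (j - i) * Φ.Es j)) = finrank F (range (Φ.Es i)) := by
  rw [← finrank_range_dualMap_eq_finrank_range, ← finrank_range_dualMap_eq_finrank_range (Φ.Es i)]
  have h := Φ.dual.finrank_range_raising hij hd
  rwa [show Φ.dual.A ^ (j - i) = (Φ.A ^ (j - i)).dualMap from (dualMap_pow _ _).symm] at h

theorem finrank_range_raising_of_le_add {i j : ℕ} (hij : i ≤ j) (hj : j ≤ d) (hd : d ≤ i + j) :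
    finrank F (range (Φ.Es j * Φ.A ^ (j - i) * Φ.Es i)) = finrank F (range (Φ.Es j)) := by
  have h := Φ.revEs.finrank_range_lowering (i := d - j) (j := d - i) (by omega) (by omega)
  rwa [Φ.revEs_Es_sub hj, Φ.revEs_Es_sub (hij.trans hj), show d - i - (d - j) = j - i by omega]
    at h

theorem finrank_range_lowering_of_le_add {i j : ℕ} (hij : i ≤ j) (hj : j ≤ d) (hd : d ≤ i + j) :
    finrank F (range (Φ.Es i * Φ.A ^ (j - i) * Φ.Es j)) = finrank F (range (Φ.Es j)) := by
  have h := Φ.revEs.finrank_range_raising (i := d - j) (j := d - i) (by omega) (by omega)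
  rwa [Φ.revEs_Es_sub hj, Φ.revEs_Es_sub (hij.trans hj), show d - i - (d - j) = j - i by omega]
    at h

end TDSystem

theorem stmt13_general {F V : Type*} [Field F] [AddCommGroup V] [Module F V]
    [FiniteDimensional F V] (d : ℕ)
    (Φ : TDSystem F V d) (ρ : ℕ → ℕ)
    (hρ : ∀ k ≤ d, ρ k = Module.finrank F (LinearMap.range (Φ.Es k))) :
    ∀ i j, i ≤ j → j ≤ d →
      Module.finrank F (LinearMap.range (Φ.Es i * Φ.A ^ (j - i) * Φ.Es j))
          = min (ρ i) (ρ j) ∧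
      Module.finrank F (LinearMap.range (Φ.Es j * Φ.A ^ (j - i) * Φ.Es i))
          = min (ρ i) (ρ j) ∧
      (i + j ≤ d → min (ρ i) (ρ j) = ρ i) ∧
      (d ≤ i + j → min (ρ i) (ρ j) = ρ j) := by
  intro i j hij hjd
  rw [hρ i (hij.trans hjd), hρ j hjd]
  have hL := LinearMap.finrank_range_mul_mul_le (Φ.Es i) (Φ.A ^ (j - i)) (Φ.Es j)
  have hR := LinearMap.finrank_range_mul_mul_le (Φ.Es j) (Φ.A ^ (j - i)) (Φ.Es i)
  rcases le_total (i + j) d with h | h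
  · have hL' := Φ.finrank_range_lowering hij h
    have hR' := Φ.finrank_range_raising hij h
    refine ⟨by omega, by omega, fun _ => by omega, fun h' => ?_⟩
    have := Φ.finrank_range_lowering_of_le_add hij hjd h'
    omega
  · have hL' := Φ.finrank_range_lowering_of_le_add hij hjd h
    have hR' := Φ.finrank_range_raising_of_le_add hij hjd h
    refine ⟨by omega, by omega, fun h' => ?_, fun _ => by omega⟩
    have := Φ.finrank_range_lowering hij h'
    omega

/-- For `0 ≤ i ≤ j ≤ d`,
`rank(E*_i A^{j-i} E*_j) = rank(E*_j A^{j-i} E*_i) = min(ρ_i, ρ_j)` where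
`ρ_k = dim E*_kV`; this minimum is `ρ_i` if `i+j ≤ d` and `ρ_j` if `i+j ≥ d`. -/
theorem stmt13 {F V : Type*} [Field F] [AddCommGroup V] [Module F V]
    [FiniteDimensional F V] [Nontrivial V] (d : ℕ) (hd : 1 ≤ d)
    (Φ : TDSystem F V d) (ρ : ℕ → ℕ)
    (hρ : ∀ k ≤ d, ρ k = Module.finrank F (LinearMap.range (Φ.Es k))) :
    ∀ i j, i ≤ j → j ≤ d →
      Module.finrank F (LinearMap.range (Φ.Es i * Φ.A ^ (j - i) * Φ.Es j))
          = min (ρ i) (ρ j) ∧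
      Module.finrank F (LinearMap.range (Φ.Es j * Φ.A ^ (j - i) * Φ.Es i))
          = min (ρ i) (ρ j) ∧
      (i + j ≤ d → min (ρ i) (ρ j) = ρ i) ∧
      (d ≤ i + j → min (ρ i) (ρ j) = ρ j) :=
  stmt13_general d Φ ρ hρ
end

section
/- (Leonard system, local three-term relation.) Suppose the tridiagonal system is a Leonard system (all eigenspaces one-dimensional) with tridiagonal-relation scalars \beta, \gamma, \varrho. Then for 2 \le i \le d: g^-_i a_{i-2} + a_{i-1} + g^+_i a_i = \gamma, where g^+_i = (\theta^*_i-\theta^*_{i+1})/(\theta^*_i-\theta^*_{i-2}), g^-_i = (\theta^*_{i-2}-\theta^*_{i-3})/(\theta^*_{i-2}-\theta^*_i), and a_k is defined by E^*_kAE^*_k = a_kE^*_k. -/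
/-!
Sandwich the tridiagonal relation between `E*_{i-2}` and `E*_i`. Since `A` is tridiagonal and
`A*` diagonal with respect to the `E*_k`, every word in it collapses to a scalar multiple of
`E*_{i-2} A E*_{i-1} A E*_i`, which is nonzero by irreducibility and `dim E*_{i-1} V = 1`.
The vanishing coefficient is a linear relation between `a_{i-2}, a_{i-1}, a_i`, and the
three-term recurrence of the `θ*_k` turns its coefficients into `g⁻_i, g⁺_i`.
-/

open Finset Module

namespace Module.End

variable {K V : Type*} [Field K] [AddCommGroup V] [Module K V]

lemma range_mul_eq_of_finrank_range_eq_one [FiniteDimensional K V] {f g : End K V}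
    (hf : finrank K (LinearMap.range f) = 1) (hfg : f * g ≠ 0) :
    LinearMap.range (f * g) = LinearMap.range f := by
  refine Submodule.eq_of_le_of_finrank_le (LinearMap.range_comp_le_range g f) ?_
  rw [hf, Nat.one_le_iff_ne_zero, Ne, Submodule.finrank_eq_zero, LinearMap.range_eq_bot]
  exact hfg

lemma mul_ne_zero_of_range_eq {f g p : End K V} (hg : LinearMap.range g = LinearMap.range p)
    (hfp : f * p ≠ 0) : f * g ≠ 0 := by
  rw [Ne, ← LinearMap.range_eq_bot, mul_eq_comp, LinearMap.range_comp, hg,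
    ← LinearMap.range_comp, ← mul_eq_comp, LinearMap.range_eq_bot]
  exact hfp

end Module.End

namespace TDSystem

variable {F V : Type*} [Field F] [AddCommGroup V] [Module F V] {d : ℕ} (Φ : TDSystem F V d)

lemma Es_mul_Es_of_ne {i k : ℕ} (hi : i ≤ d) (hk : k ≤ d) (h : i ≠ k) :
    Φ.Es i * Φ.Es k = 0 := by
  simpa [h] using Φ.hEsEs i hi k hk

lemma commute_Es {i k : ℕ} (hi : i ≤ d) (hk : k ≤ d) : Commute (Φ.Es i) (Φ.Es k) := by
  rcases eq_or_ne i k with rfl | h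
  · exact Commute.refl _
  · rw [Commute, SemiconjBy, Φ.Es_mul_Es_of_ne hi hk h, Φ.Es_mul_Es_of_ne hk hi h.symm]

lemma Es_mul_sum_smul_Es {i : ℕ} (hi : i ≤ d) {s : Finset ℕ} (hs : s ⊆ range (d + 1))
    (w : ℕ → F) : Φ.Es i * ∑ k ∈ s, w k • Φ.Es k = if i ∈ s then w i • Φ.Es i else 0 := by
  rw [mul_sum, ← sum_ite_eq s i (fun k => w k • Φ.Es i)]
  refine sum_congr rfl fun k hk => ?_
  rw [mul_smul_comm, Φ.hEsEs i hi k (by simpa [Nat.lt_succ_iff] using hs hk)]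
  split_ifs with h <;> simp [h]

lemma sum_smul_Es_mul_Es {i : ℕ} (hi : i ≤ d) {s : Finset ℕ} (hs : s ⊆ range (d + 1))
    (w : ℕ → F) : (∑ k ∈ s, w k • Φ.Es k) * Φ.Es i = if i ∈ s then w i • Φ.Es i else 0 := by
  rw [sum_mul, ← sum_ite_eq' s i (fun k => w k • Φ.Es i)]
  refine sum_congr rfl fun k hk => ?_
  rw [smul_mul_assoc, Φ.hEsEs k (by simpa [Nat.lt_succ_iff] using hs hk) i hi]
  split_ifs with h <;> simp [h]

lemma As_mul_Es {i : ℕ} (hi : i ≤ d) : Φ.As * Φ.Es i = Φ.θs i • Φ.Es i := by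
  simpa [← Φ.hAs, Nat.lt_succ_iff, hi] using Φ.sum_smul_Es_mul_Es hi subset_rfl Φ.θs

lemma Es_mul_As {i : ℕ} (hi : i ≤ d) : Φ.Es i * Φ.As = Φ.θs i • Φ.Es i := by
  simpa [← Φ.hAs, Nat.lt_succ_iff, hi] using Φ.Es_mul_sum_smul_Es hi subset_rfl Φ.θs

lemma Es_mul_As_mul {i : ℕ} (hi : i ≤ d) (Z : End F V) :
    Φ.Es i * (Φ.As * Z) = Φ.θs i • (Φ.Es i * Z) := by
  rw [← mul_assoc, Φ.Es_mul_As hi, smul_mul_assoc]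

lemma Es_A_Es_succ_ne_zero {m : ℕ} (hm : m + 1 ≤ d) :
    Φ.Es m * Φ.A * Φ.Es (m + 1) ≠ 0 := by
  intro h0
  set P := ∑ k ∈ Ico (m + 1) (d + 1), Φ.Es k with hP
  have hIco : Ico (m + 1) (d + 1) ⊆ range (d + 1) := fun k hk => by
    simp only [mem_Ico, mem_range] at hk ⊢; omega
  -- `P` projects onto `∑_{k > m} E*_k V`, which is `A`-invariant because the only block of `A`
  -- leading out of it is `E*_m A E*_{m+1} = 0`.
  have hAP : Φ.A * P = P * (Φ.A * P) := by
    have hlow : (∑ k ∈ range (m + 1), Φ.Es k) * (Φ.A * P) = 0 := by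
      simp only [hP, sum_mul, mul_sum, ← mul_assoc]
      refine sum_eq_zero fun l hl => sum_eq_zero fun k hk => ?_
      simp only [mem_range, mem_Ico] at hk hl
      by_cases hkl : k = m ∧ l = m + 1
      · rw [hkl.1, hkl.2, h0]
      · exact Φ.htri k (by omega) l (by omega) (by omega)
    have hsplit : ∑ k ∈ range (m + 1), Φ.Es k + P = 1 := by
      rw [hP, ← Φ.hEssum, range_eq_Ico, range_eq_Ico, ← sum_Ico_consecutive _ (Nat.zero_le _)
        (by omega : m + 1 ≤ d + 1)]
    calc Φ.A * P = (∑ k ∈ range (m + 1), Φ.Es k + P) * (Φ.A * P) := by rw [hsplit, one_mul]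
      _ = P * (Φ.A * P) := by rw [add_mul, hlow, zero_add]
  have hAsP : Commute Φ.As P := by
    rw [Φ.hAs]
    exact Commute.sum_left _ _ _ fun k hk => Commute.sum_right _ _ _ fun l hl =>
      ((Φ.commute_Es (by simpa [Nat.lt_succ_iff] using hk)
        (by simpa [Nat.lt_succ_iff] using hIco hl)).smul_left _)
  have hinv {X Y : End F V} (h : X * P = P * Y) :
      ∀ v ∈ LinearMap.range P, X v ∈ LinearMap.range P := by
    rintro _ ⟨u, rfl⟩
    exact ⟨Y u, by rw [← End.mul_apply, ← h, End.mul_apply]⟩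
  rcases Φ.hirr _ (hinv hAP) (hinv hAsP.eq) with hbot | htop
  · apply Φ.hEsne (m + 1) hm
    have hPEs : P * Φ.Es (m + 1) = Φ.Es (m + 1) := by
      simpa [hm, Nat.lt_succ_iff] using Φ.sum_smul_Es_mul_Es hm hIco 1
    rw [← hPEs, LinearMap.range_eq_bot.mp hbot, zero_mul]
  · apply Φ.hEsne 0 (Nat.zero_le d)
    have hEsP : Φ.Es 0 * P = 0 * P := by
      simpa using Φ.Es_mul_sum_smul_Es (Nat.zero_le d) hIco 1
    exact (LinearMap.cancel_right (LinearMap.range_eq_top.mp htop)).mp hEsP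

lemma Es_A_Es_A_Es_ne_zero [FiniteDimensional F V]
    (hdimEs : ∀ i ≤ d, finrank F (LinearMap.range (Φ.Es i)) = 1) {j : ℕ} (hj : j + 2 ≤ d) :
    Φ.Es j * (Φ.A * (Φ.Es (j + 1) * (Φ.A * Φ.Es (j + 2)))) ≠ 0 := by
  rw [← mul_assoc]
  refine End.mul_ne_zero_of_range_eq (End.range_mul_eq_of_finrank_range_eq_one
    (hdimEs (j + 1) (by omega)) ?_) (Φ.Es_A_Es_succ_ne_zero (by omega))
  rw [← mul_assoc]
  exact Φ.Es_A_Es_succ_ne_zero (m := j + 1) hj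

lemma Es_A_Es_eq_zero {i k : ℕ} (hi : i ≤ d) (hk : k ≤ d) (hfar : i + 1 < k ∨ k + 1 < i) :
    Φ.Es i * (Φ.A * Φ.Es k) = 0 := by
  rw [← mul_assoc, Φ.htri i hi k hk hfar]

lemma Es_A_Es_mul_eq_zero {i k : ℕ} (hi : i ≤ d) (hk : k ≤ d) (hfar : i + 1 < k ∨ k + 1 < i)
    (Z : End F V) : Φ.Es i * (Φ.A * (Φ.Es k * Z)) = 0 := by
  rw [← mul_assoc, ← mul_assoc, Φ.htri i hi k hk hfar, zero_mul]

lemma eq_sum_smul_Es {U : End F V} {u : ℕ → F} (hU : ∀ m ≤ d, Φ.Es m * U = u m • Φ.Es m) :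
    U = ∑ m ∈ range (d + 1), u m • Φ.Es m := by
  calc U = (∑ m ∈ range (d + 1), Φ.Es m) * U := by rw [Φ.hEssum, one_mul]
    _ = _ := by
      rw [sum_mul]
      exact sum_congr rfl fun m hm => hU m (by simpa [Nat.lt_succ_iff] using hm)

lemma Es_A_diag_A_Es {j : ℕ} (hj : j + 2 ≤ d) {U : End F V} {u : ℕ → F}
    (hU : ∀ m ≤ d, Φ.Es m * U = u m • Φ.Es m) :
    Φ.Es j * (Φ.A * (U * (Φ.A * Φ.Es (j + 2))))
      = u (j + 1) • (Φ.Es j * (Φ.A * (Φ.Es (j + 1) * (Φ.A * Φ.Es (j + 2))))) := by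
  rw [Φ.eq_sum_smul_Es hU]
  simp only [sum_mul, mul_sum, smul_mul_assoc, mul_smul_comm]
  refine sum_eq_single (j + 1) (fun m hm hne => ?_)
    (fun h => absurd (by simp only [mem_range]; omega) h)
  rw [mem_range] at hm
  rcases Nat.lt_or_ge (j + 1) m with h | h
  · rw [Φ.Es_A_Es_mul_eq_zero (by omega) (by omega) (by omega), smul_zero]
  · rw [Φ.Es_A_Es_eq_zero (i := m) (by omega) hj (by omega), mul_zero, mul_zero, smul_zero]

lemma Es_A_Es_self {a : ℕ → F} (ha : ∀ i ≤ d, Φ.Es i * Φ.A * Φ.Es i = a i • Φ.Es i) {i : ℕ}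
    (hi : i ≤ d) : Φ.Es i * (Φ.A * Φ.Es i) = a i • Φ.Es i := by
  rw [← mul_assoc, ha i hi]

lemma Es_A_Es_self_mul {a : ℕ → F} (ha : ∀ i ≤ d, Φ.Es i * Φ.A * Φ.Es i = a i • Φ.Es i) {i : ℕ}
    (hi : i ≤ d) (Z : End F V) :
    Φ.Es i * (Φ.A * (Φ.Es i * Z)) = a i • (Φ.Es i * Z) := by
  rw [← mul_assoc, ← mul_assoc, ha i hi, smul_mul_assoc]

lemma Es_A_diag_A_diag_A_Es {a : ℕ → F} (ha : ∀ i ≤ d, Φ.Es i * Φ.A * Φ.Es i = a i • Φ.Es i)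
    {j : ℕ} (hj : j + 2 ≤ d) {U W : End F V} {u w : ℕ → F}
    (hU : ∀ m ≤ d, Φ.Es m * U = u m • Φ.Es m) (hW : ∀ m ≤ d, Φ.Es m * W = w m • Φ.Es m) :
    Φ.Es j * (Φ.A * (U * (Φ.A * (W * (Φ.A * Φ.Es (j + 2))))))
      = (u j * w (j + 1) * a j + u (j + 1) * w (j + 1) * a (j + 1)
          + u (j + 1) * w (j + 2) * a (j + 2))
        • (Φ.Es j * (Φ.A * (Φ.Es (j + 1) * (Φ.A * Φ.Es (j + 2))))) := by
  rw [Φ.eq_sum_smul_Es hU, Φ.eq_sum_smul_Es hW]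
  simp only [sum_mul, mul_sum, smul_mul_assoc, mul_smul_comm, smul_sum]
  rw [sum_comm, ← sum_product', ← sum_subset (s₁ := {(j, j + 1), (j + 1, j + 1), (j + 1, j + 2)})]
  · rw [sum_insert (by simp), sum_insert (by simp), sum_singleton]
    simp only
    rw [Φ.Es_A_Es_self_mul ha (by omega), Φ.Es_A_Es_self_mul ha (by omega),
      Φ.Es_A_Es_self ha (by omega)]
    simp only [mul_smul_comm]
    module
  · intro p hp
    simp only [mem_insert, mem_singleton] at hp
    rcases hp with rfl | rfl | rfl <;> simp only [mem_product, mem_range] <;> omega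
  · rintro ⟨m, n⟩ hp hpath
    simp only [mem_product, mem_range, mem_insert, mem_singleton, Prod.mk.injEq] at hp hpath
    by_cases h1 : j + 1 < m ∨ m + 1 < j
    · rw [Φ.Es_A_Es_mul_eq_zero (by omega) (by omega) h1, smul_zero, smul_zero]
    by_cases h2 : m + 1 < n ∨ n + 1 < m
    · rw [Φ.Es_A_Es_mul_eq_zero (by omega) (by omega) h2, mul_zero, mul_zero, smul_zero,
        smul_zero]
    rw [Φ.Es_A_Es_eq_zero (i := n) (by omega) hj (by omega)]
    simp

lemma tridiagonal_relation_sandwich [FiniteDimensional F V]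
    (hdimEs : ∀ i ≤ d, finrank F (LinearMap.range (Φ.Es i)) = 1) {β γ ϱ : F} {a : ℕ → F}
    (hTD1 : Φ.A * (Φ.A ^ 2 * Φ.As - β • (Φ.A * Φ.As * Φ.A) + Φ.As * Φ.A ^ 2
          - γ • (Φ.A * Φ.As + Φ.As * Φ.A) - ϱ • Φ.As)
        - (Φ.A ^ 2 * Φ.As - β • (Φ.A * Φ.As * Φ.A) + Φ.As * Φ.A ^ 2
          - γ • (Φ.A * Φ.As + Φ.As * Φ.A) - ϱ • Φ.As) * Φ.A = 0)
    (ha : ∀ i ≤ d, Φ.Es i * Φ.A * Φ.Es i = a i • Φ.Es i) {j : ℕ} (hj : j + 2 ≤ d) :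
    (Φ.θs (j + 2) - Φ.θs (j + 1) + β * (Φ.θs j - Φ.θs (j + 1))) * a j
      + (Φ.θs (j + 2) - Φ.θs j) * a (j + 1)
      + (Φ.θs (j + 1) - Φ.θs j + β * (Φ.θs (j + 1) - Φ.θs (j + 2))) * a (j + 2)
      = γ * (Φ.θs (j + 2) - Φ.θs j) := by
  have hone : ∀ m ≤ d, Φ.Es m * 1 = (1 : ℕ → F) m • Φ.Es m := fun m _ => by simp
  have hAs : ∀ m ≤ d, Φ.Es m * Φ.As = Φ.θs m • Φ.Es m := fun m hm => Φ.Es_mul_As hm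
  have hAAA := Φ.Es_A_diag_A_diag_A_Es ha hj hone hone
  have hAAsAA := Φ.Es_A_diag_A_diag_A_Es ha hj hAs hone
  have hAAAsA := Φ.Es_A_diag_A_diag_A_Es ha hj hone hAs
  have hAA := Φ.Es_A_diag_A_Es hj hone
  have hAAsA := Φ.Es_A_diag_A_Es hj hAs
  simp only [one_mul, Pi.one_apply, mul_one] at hAAA hAAsAA hAAAsA hAA
  have hsand := congrArg (fun X => Φ.Es j * X * Φ.Es (j + 2)) hTD1
  simp only [pow_two, mul_sub, sub_mul, mul_add, add_mul, smul_mul_assoc, mul_smul_comm,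
    mul_assoc, mul_zero, zero_mul, Φ.As_mul_Es hj, Φ.Es_mul_As_mul (by omega : j ≤ d)] at hsand
  rw [hAAA, hAAsAA, hAAAsA, hAA, hAAsA,
    Φ.Es_A_Es_eq_zero (i := j) (by omega) hj (by omega)] at hsand
  refine sub_eq_zero.mp ((smul_eq_zero.mp ?_).resolve_right (Φ.Es_A_Es_A_Es_ne_zero hdimEs hj))
  rw [← hsand]
  module

end TDSystem

lemma local_relation_of_recurrence {F : Type*} [Field F] {t : ℤ → F} {β γ γs a₀ a₁ a₂ : F}
    {k : ℤ} (hrec : ∀ n, k - 2 ≤ n → n ≤ k → γs = t (n - 1) - β * t n + t (n + 1))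
    (hne : t (k - 2) ≠ t k)
    (hkey : (t k - t (k - 1) + β * (t (k - 2) - t (k - 1))) * a₀ + (t k - t (k - 2)) * a₁
      + (t (k - 1) - t (k - 2) + β * (t (k - 1) - t k)) * a₂ = γ * (t k - t (k - 2))) :
    (t (k - 2) - t (k - 3)) / (t (k - 2) - t k) * a₀ + a₁
      + (t k - t (k + 1)) / (t k - t (k - 2)) * a₂ = γ := by
  have h₀ : γs = t (k - 3) - β * t (k - 2) + t (k - 1) := by
    convert hrec (k - 2) le_rfl (by omega) using 3 <;> ring_nf
  have h₁ : γs = t (k - 2) - β * t (k - 1) + t k := by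
    convert hrec (k - 1) (by omega) (by omega) using 3 <;> ring_nf
  have h₂ := hrec k (by omega) le_rfl
  have e₀ : t (k - 2) - t (k - 3) = -(t k - t (k - 1) + β * (t (k - 2) - t (k - 1))) := by
    linear_combination h₀ - h₁
  have e₂ : t k - t (k + 1) = t (k - 1) - t (k - 2) + β * (t (k - 1) - t k) := by
    linear_combination h₂ - h₁
  have hD : t k - t (k - 2) ≠ 0 := sub_ne_zero.mpr hne.symm
  rw [e₀, e₂, ← neg_sub (t k), neg_div_neg_eq]
  field_simp
  linear_combination hkey

theorem stmt14_general {F V : Type*} [Field F] [AddCommGroup V] [Module F V]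
    [FiniteDimensional F V] (d : ℕ)
    (Φ : TDSystem F V d)
    (hdimEs : ∀ i ≤ d, Module.finrank F (LinearMap.range (Φ.Es i)) = 1)
    (β γ γs ϱ : F) (t : ℤ → F) (a : ℕ → F)
    (ht : ∀ i : ℕ, i ≤ d → t i = Φ.θs i)
    (hext : ∀ i : ℤ, 0 ≤ i → i ≤ (d : ℤ) → γs = t (i - 1) - β * t i + t (i + 1))
    (hTD1 : Φ.A * (Φ.A ^ 2 * Φ.As - β • (Φ.A * Φ.As * Φ.A) + Φ.As * Φ.A ^ 2
          - γ • (Φ.A * Φ.As + Φ.As * Φ.A) - ϱ • Φ.As)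
        - (Φ.A ^ 2 * Φ.As - β • (Φ.A * Φ.As * Φ.A) + Φ.As * Φ.A ^ 2
          - γ • (Φ.A * Φ.As + Φ.As * Φ.A) - ϱ • Φ.As) * Φ.A = 0)
    (ha : ∀ i ≤ d, Φ.Es i * Φ.A * Φ.Es i = a i • Φ.Es i) :
    ∀ i : ℕ, 2 ≤ i → i ≤ d →
      ((t ((i : ℤ) - 2) - t ((i : ℤ) - 3)) / (t ((i : ℤ) - 2) - t (i : ℤ))) * a (i - 2)
        + a (i - 1)
        + ((t (i : ℤ) - t ((i : ℤ) + 1)) / (t (i : ℤ) - t ((i : ℤ) - 2))) * a i = γ := by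
  intro i hi2 hid
  have ht' : ∀ n ≤ d, ∀ m : ℤ, m = n → t m = Φ.θs n := fun n hn m hm => hm ▸ ht n hn
  have hkey := Φ.tridiagonal_relation_sandwich hdimEs hTD1 ha (j := i - 2) (by omega)
  rw [show i - 2 + 1 = i - 1 by omega, show i - 2 + 2 = i by omega,
    ← ht' (i - 2) (by omega) (i - 2) (by omega), ← ht' (i - 1) (by omega) (i - 1) (by omega),
    ← ht i hid] at hkey
  refine local_relation_of_recurrence (fun n h h' => hext n (by omega) (by omega)) ?_ hkey
  rw [ht' (i - 2) (by omega) (i - 2) (by omega), ht i hid]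
  exact Φ.hθs _ (by omega) _ hid (by omega)

/-- For a Leonard system (all eigenspaces one-dimensional) with
tridiagonal-relation scalars `β, γ, ϱ` (and duals `γ*, ϱ*`), and the dual eigenvalue
sequence extended to indices `-1, d+1` via `γ* = θ*_{i-1} - β θ*_i + θ*_{i+1}`,
one has `g⁻_i a_{i-2} + a_{i-1} + g⁺_i a_i = γ` for `2 ≤ i ≤ d`, where
`g⁺_i = (θ*_i-θ*_{i+1})/(θ*_i-θ*_{i-2})`, `g⁻_i = (θ*_{i-2}-θ*_{i-3})/(θ*_{i-2}-θ*_i)`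
and `E*_k A E*_k = a_k E*_k`. -/
theorem stmt14 {F V : Type*} [Field F] [AddCommGroup V] [Module F V]
    [FiniteDimensional F V] [Nontrivial V] (d : ℕ) (hd : 1 ≤ d)
    (Φ : TDSystem F V d)
    (hdimE : ∀ i ≤ d, Module.finrank F (LinearMap.range (Φ.E i)) = 1)
    (hdimEs : ∀ i ≤ d, Module.finrank F (LinearMap.range (Φ.Es i)) = 1)
    (β γ γs ϱ ϱs : F) (t : ℤ → F) (a : ℕ → F)
    (ht : ∀ i : ℕ, i ≤ d → t i = Φ.θs i)
    (hext : ∀ i : ℤ, 0 ≤ i → i ≤ (d : ℤ) → γs = t (i - 1) - β * t i + t (i + 1))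
    (hTD1 : Φ.A * (Φ.A ^ 2 * Φ.As - β • (Φ.A * Φ.As * Φ.A) + Φ.As * Φ.A ^ 2
          - γ • (Φ.A * Φ.As + Φ.As * Φ.A) - ϱ • Φ.As)
        - (Φ.A ^ 2 * Φ.As - β • (Φ.A * Φ.As * Φ.A) + Φ.As * Φ.A ^ 2
          - γ • (Φ.A * Φ.As + Φ.As * Φ.A) - ϱ • Φ.As) * Φ.A = 0)
    (hTD2 : Φ.As * (Φ.As ^ 2 * Φ.A - β • (Φ.As * Φ.A * Φ.As) + Φ.A * Φ.As ^ 2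
          - γs • (Φ.As * Φ.A + Φ.A * Φ.As) - ϱs • Φ.A)
        - (Φ.As ^ 2 * Φ.A - β • (Φ.As * Φ.A * Φ.As) + Φ.A * Φ.As ^ 2
          - γs • (Φ.As * Φ.A + Φ.A * Φ.As) - ϱs • Φ.A) * Φ.As = 0)
    (ha : ∀ i ≤ d, Φ.Es i * Φ.A * Φ.Es i = a i • Φ.Es i) :
    ∀ i : ℕ, 2 ≤ i → i ≤ d →
      ((t ((i : ℤ) - 2) - t ((i : ℤ) - 3)) / (t ((i : ℤ) - 2) - t (i : ℤ))) * a (i - 2)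
        + a (i - 1)
        + ((t (i : ℤ) - t ((i : ℤ) + 1)) / (t (i : ℤ) - t ((i : ℤ) - 2))) * a i = γ :=
  stmt14_general d Φ hdimEs β γ γs ϱ t a ht hext hTD1 ha
end
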